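/- arXiv:0905.4585 — 6 statements merged into one kernel-verified Lean document; each statement's English description precedes it below -/
import Mathlib

section
/- Let L : ℝ^n × ℝ^{m·k} → ℝ be a smooth regular Lagrangian and let ρ^i_α, C^γ_{αβ} : ℝ^n → ℝ be structure functions. Suppose smooth functions ξ^α_A, (ξ_A)^α_B : ℝ^n × ℝ^{m·k} → ℝ (1 ≤ α, β ≤ m, 1 ≤ A, B ≤ k) satisfy, at every point (q, y), for each α: Σ_{A,β} ξ^β_A · ( Σ_i ρ^i_α(q) ∂²L/∂q^i∂y^β_A − Σ_i ρ^i_β(q) ∂²L/∂q^i∂y^α_A + Σ_γ C^γ_{βα}(q) ∂L/∂y^γ_A ) − Σ_{A,B,β} (ξ_A)^β_B ∂²L/∂y^β_B∂y^α_A = Σ_i ρ^i_α(q) ( Σ_{A,β} y^β_A ∂²L/∂q^i∂y^β_A − ∂L/∂q^i ), and, for each β and B: Σ_{A,α} ξ^α_A ∂²L/∂y^β_B∂y^α_A = Σ_{A,α} y^α_A ∂²L/∂y^β_B∂y^α_A. Then ξ^α_A(q,y) = y^α_A identically (i.e. ξ is a second-order partial differential equation, SOPDE), and for each α at every point: Σ_{A,β,i}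 y^β_A ρ^i_β(q) ∂²L/∂q^i∂y^α_A + Σ_{A,B,β} (ξ_A)^β_B ∂²L/∂y^α_A∂y^β_B = Σ_i ρ^i_α(q) ∂L/∂q^i + Σ_{A,β,γ} y^β_A C^γ_{βα}(q) ∂L/∂y^γ_A. -/
open scoped BigOperators

noncomputable section

/-- The space `ℝ^n × ℝ^{m·k}` with coordinates `(qⁱ, yᵅ_A)`. -/
abbrev KPt (n m k : ℕ) : Type := (Fin n → ℝ) × (Fin m → Fin k → ℝ)

/-- Partial derivative of `f : ℝ^n → ℝ` in the `i`-th coordinate direction. -/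
noncomputable def pQn {n : ℕ} (f : (Fin n → ℝ) → ℝ) (i : Fin n) (q : Fin n → ℝ) : ℝ :=
  fderiv ℝ f q (Pi.single i 1)

/-- `∂f/∂qⁱ` for `f : ℝ^n × ℝ^{m·k} → ℝ`. -/
noncomputable def pQ {n m k : ℕ} (f : KPt n m k → ℝ) (i : Fin n) (p : KPt n m k) : ℝ :=
  fderiv ℝ f p ((Pi.single i 1 : Fin n → ℝ), (0 : Fin m → Fin k → ℝ))

/-- `∂f/∂yᵅ_A` for `f : ℝ^n × ℝ^{m·k} → ℝ`. -/
noncomputable def pY {n m k : ℕ} (f : KPt n m k → ℝ) (α : Fin m) (A : Fin k) (p : KPt n m k) : ℝ :=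
  fderiv ℝ f p ((0 : Fin n → ℝ), (Pi.single α (Pi.single A 1) : Fin m → Fin k → ℝ))

/-- `∂f/∂t^A` for `f : ℝ^k → ℝ`. -/
noncomputable def pT {k : ℕ} (f : (Fin k → ℝ) → ℝ) (A : Fin k) (t : Fin k → ℝ) : ℝ :=
  fderiv ℝ f t (Pi.single A 1)

/-- Regularity of a Lagrangian: the Hessian in the velocity variables is invertible
at every point. -/
def RegularL {n m k : ℕ} (L : KPt n m k → ℝ) : Prop :=
  ∀ p : KPt n m k,
    IsUnit (Matrix.of (fun a b : Fin m × Fin k => pY (pY L b.1 b.2) a.1 a.2 p) :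
      Matrix (Fin m × Fin k) (Fin m × Fin k) ℝ)

/-- The Legendre transformation associated with a Lagrangian `L`. -/
noncomputable def Leg {n m k : ℕ} (L : KPt n m k → ℝ) (p : KPt n m k) : KPt n m k :=
  (p.1, fun α A => pY L α A p)

/-- The Lagrangian energy `E_L`. -/
noncomputable def EnergyL {n m k : ℕ} (L : KPt n m k → ℝ) (p : KPt n m k) : ℝ :=
  (∑ A : Fin k, ∑ α : Fin m, p.2 α A * pY L α A p) - L p

lemma pY_eq_snd {n m k : ℕ} (L : KPt n m k → ℝ) (hL : ContDiff ℝ (⊤ : ℕ∞) L) (α : Fin m) (A : Fin k)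
    (β : Fin m) (B : Fin k) (p : KPt n m k) :
    pY (pY L α A) β B p
      = fderiv ℝ (fderiv ℝ L) p
          ((0 : Fin n → ℝ), (Pi.single β (Pi.single B 1) : Fin m → Fin k → ℝ))
          ((0 : Fin n → ℝ), (Pi.single α (Pi.single A 1) : Fin m → Fin k → ℝ)) := by
  have hd : DifferentiableAt ℝ (fderiv ℝ L) p :=
    ((hL.fderiv_right (m := (⊤ : ℕ∞)) (by simp)).differentiable (by simp)).differentiableAt
  unfold pY
  rw [fderiv_clm_apply hd (differentiableAt_const _)]
  simp

lemma pY_symm {n m k : ℕ} (L : KPt n m k → ℝ) (hL : ContDiff ℝ (⊤ : ℕ∞) L) (α : Fin m) (A : Fin k)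
    (β : Fin m) (B : Fin k) (p : KPt n m k) :
    pY (pY L α A) β B p = pY (pY L β B) α A p := by
  rw [pY_eq_snd L hL α A β B p, pY_eq_snd L hL β B α A p]
  exact (hL.contDiffAt.of_le le_rfl).isSymmSndFDerivAt (by simp only [minSmoothness_of_isRCLikeNormedField]; exact WithTop.coe_le_coe.2 (le_top : (2 : ℕ∞) ≤ ⊤)) _ _

/-- A solution of the local geometric Euler–Lagrange equations on a Lie
algebroid is a SOPDE, and satisfies the reduced equations. -/
theorem stmt0 {n m k : ℕ} (L : KPt n m k → ℝ) (hL : ContDiff ℝ (⊤ : ℕ∞) L) (hreg : RegularL L)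
    (ρ : Fin n → Fin m → (Fin n → ℝ) → ℝ) (C : Fin m → Fin m → Fin m → (Fin n → ℝ) → ℝ)
    (hρ : ∀ i α, ContDiff ℝ (⊤ : ℕ∞) (ρ i α)) (hC : ∀ γ α β, ContDiff ℝ (⊤ : ℕ∞) (C γ α β))
    (hCanti : ∀ γ α β q, C γ α β q = - C γ β α q)
    (ξ : Fin m → Fin k → KPt n m k → ℝ) (ξ2 : Fin k → Fin m → Fin k → KPt n m k → ℝ)
    (hξ : ∀ α A, ContDiff ℝ (⊤ : ℕ∞) (ξ α A)) (hξ2 : ∀ A α B, ContDiff ℝ (⊤ : ℕ∞) (ξ2 A α B))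
    (heq1 : ∀ (p : KPt n m k) (α : Fin m),
      (∑ A : Fin k, ∑ β : Fin m, ξ β A p *
          ((∑ i : Fin n, ρ i α p.1 * pQ (pY L β A) i p)
            - (∑ i : Fin n, ρ i β p.1 * pQ (pY L α A) i p)
            + ∑ γ : Fin m, C γ β α p.1 * pY L γ A p))
        - (∑ A : Fin k, ∑ B : Fin k, ∑ β : Fin m, ξ2 A β B p * pY (pY L α A) β B p)
      = ∑ i : Fin n, ρ i α p.1 *
          ((∑ A : Fin k, ∑ β : Fin m, p.2 β A * pQ (pY L β A) i p) - pQ L i p))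
    (heq2 : ∀ (p : KPt n m k) (β : Fin m) (B : Fin k),
      (∑ A : Fin k, ∑ α : Fin m, ξ α A p * pY (pY L α A) β B p)
      = ∑ A : Fin k, ∑ α : Fin m, p.2 α A * pY (pY L α A) β B p) :
    (∀ (α : Fin m) (A : Fin k) (p : KPt n m k), ξ α A p = p.2 α A) ∧
    (∀ (p : KPt n m k) (α : Fin m),
      (∑ A : Fin k, ∑ β : Fin m, ∑ i : Fin n,
          p.2 β A * ρ i β p.1 * pQ (pY L α A) i p)
        + (∑ A : Fin k, ∑ B : Fin k, ∑ β : Fin m, ξ2 A β B p * pY (pY L β B) α A p)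
      = (∑ i : Fin n, ρ i α p.1 * pQ L i p)
        + ∑ A : Fin k, ∑ β : Fin m, ∑ γ : Fin m, p.2 β A * C γ β α p.1 * pY L γ A p) := by
  -- Part 1: SOPDE
  have hsopde : ∀ (α : Fin m) (A : Fin k) (p : KPt n m k), ξ α A p = p.2 α A := by
    intro α A p
    set M : Matrix (Fin m × Fin k) (Fin m × Fin k) ℝ :=
      Matrix.of (fun a b : Fin m × Fin k => pY (pY L b.1 b.2) a.1 a.2 p) with hM
    set v : Fin m × Fin k → ℝ := fun x => ξ x.1 x.2 p - p.2 x.1 x.2 with hv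
    have hMv : M.mulVec v = 0 := by
      funext a
      have h2 := heq2 p a.1 a.2
      have e1 : (∑ x : Fin m, ∑ y : Fin k, pY (pY L x y) a.1 a.2 p * ξ x y p)
          = ∑ A : Fin k, ∑ α : Fin m, ξ α A p * pY (pY L α A) a.1 a.2 p := by
        rw [Finset.sum_comm]
        exact Finset.sum_congr rfl fun _ _ => Finset.sum_congr rfl fun _ _ => mul_comm _ _
      have e2 : (∑ x : Fin m, ∑ y : Fin k, pY (pY L x y) a.1 a.2 p * p.2 x y)
          = ∑ A : Fin k, ∑ α : Fin m, p.2 α A * pY (pY L α A) a.1 a.2 p := by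
        rw [Finset.sum_comm]
        exact Finset.sum_congr rfl fun _ _ => Finset.sum_congr rfl fun _ _ => mul_comm _ _
      simp only [Matrix.mulVec, Matrix.of_apply, dotProduct, hM, hv, Pi.zero_apply,
        Fintype.sum_prod_type, mul_sub, Finset.sum_sub_distrib]
      rw [e1, e2, h2, sub_self]
    have hinj := Matrix.mulVec_injective_iff_isUnit.2 (hreg p)
    have hv0 : v = 0 := by
      apply hinj
      rw [hMv, Matrix.mulVec_zero]
    have := congrFun hv0 (α, A)
    simpa [hv, sub_eq_zero] using this
  refine ⟨hsopde, ?_⟩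
  intro p α
  have h1 := heq1 p α
  simp only [hsopde] at h1
  -- abbreviations
  set a : Fin k → Fin m → ℝ := fun A β => ∑ i : Fin n, ρ i α p.1 * pQ (pY L β A) i p with ha
  set b : Fin k → Fin m → ℝ := fun A β => ∑ i : Fin n, ρ i β p.1 * pQ (pY L α A) i p with hb
  set c : Fin k → Fin m → ℝ := fun A β => ∑ γ : Fin m, C γ β α p.1 * pY L γ A p with hc
  set R : ℝ := ∑ i : Fin n, ρ i α p.1 * pQ L i p with hR
  -- rewrite RHS of h1
  have eR : (∑ i : Fin n, ρ i α p.1 *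
        ((∑ A : Fin k, ∑ β : Fin m, p.2 β A * pQ (pY L β A) i p) - pQ L i p))
      = (∑ A : Fin k, ∑ β : Fin m, p.2 β A * a A β) - R := by
    simp only [mul_sub, Finset.sum_sub_distrib, hR]
    congr 1
    simp only [Finset.mul_sum, ha]
    rw [Finset.sum_comm]
    refine Finset.sum_congr rfl fun A _ => ?_
    rw [Finset.sum_comm]
    exact Finset.sum_congr rfl fun β _ => Finset.sum_congr rfl fun i _ => by ring
  rw [eR] at h1
  have eL : (∑ A : Fin k, ∑ β : Fin m, p.2 β A * (a A β - b A β + c A β))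
      = (∑ A : Fin k, ∑ β : Fin m, p.2 β A * a A β)
        - (∑ A : Fin k, ∑ β : Fin m, p.2 β A * b A β)
        + (∑ A : Fin k, ∑ β : Fin m, p.2 β A * c A β) := by
    simp only [mul_sub, mul_add, Finset.sum_sub_distrib, Finset.sum_add_distrib]
  rw [eL] at h1
  -- rewrite goal terms
  have g1 : (∑ A : Fin k, ∑ β : Fin m, ∑ i : Fin n,
        p.2 β A * ρ i β p.1 * pQ (pY L α A) i p)
      = ∑ A : Fin k, ∑ β : Fin m, p.2 β A * b A β := by
    refine Finset.sum_congr rfl fun A _ => Finset.sum_congr rfl fun β _ => ?_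
    rw [hb, Finset.mul_sum]
    exact Finset.sum_congr rfl fun i _ => by ring
  have g2 : (∑ A : Fin k, ∑ B : Fin k, ∑ β : Fin m, ξ2 A β B p * pY (pY L β B) α A p)
      = ∑ A : Fin k, ∑ B : Fin k, ∑ β : Fin m, ξ2 A β B p * pY (pY L α A) β B p := by
    refine Finset.sum_congr rfl fun A _ => Finset.sum_congr rfl fun B _ =>
      Finset.sum_congr rfl fun β _ => ?_
    rw [pY_symm L hL β B α A p]
  have g3 : (∑ A : Fin k, ∑ β : Fin m, ∑ γ : Fin m, p.2 β A * C γ β α p.1 * pY L γ A p)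
      = ∑ A : Fin k, ∑ β : Fin m, p.2 β A * c A β := by
    refine Finset.sum_congr rfl fun A _ => Finset.sum_congr rfl fun β _ => ?_
    rw [hc, Finset.mul_sum]
    exact Finset.sum_congr rfl fun γ _ => by ring
  rw [g1, g2, g3]
  linarith [h1]
end
end

section
/- (Standard case E = TQ.) Let L : ℝ^n × ℝ^{n·k} → ℝ be smooth with coordinates (q^i, v^i_A), and suppose at every point the (nk) × (nk) matrix with entries ∂²L/∂v^i_A ∂v^j_B is invertible. Suppose smooth functions ξ^i_A, (ξ_A)^i_B : ℝ^n × ℝ^{n·k} → ℝ satisfy, at every point, for each j: Σ_{A,i} ξ^i_A ( ∂²L/∂q^j∂v^i_A − ∂²L/∂q^i∂v^j_A ) − Σ_{A,B,i} (ξ_A)^i_B ∂²L/∂v^i_B∂v^j_A = Σ_{A,i} v^i_A ∂²L/∂q^j∂v^i_A − ∂L/∂q^j, and for each l, B: Σ_{A,i} ξ^i_A ∂²L/∂v^l_B∂v^i_A = Σ_{A,i} v^i_A ∂²L/∂v^l_B∂v^i_A. Then: (1) ξ^i_A = v^i_A identically (ξ is a SOPDE); and (2) if φ : ℝ^k → ℝ^n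 is smooth and its first prolongation φ^(1)(t) = (φ^i(t), ∂φ^i/∂t^A(t)) satisfies ∂²φ^i/∂t^B∂t^A = (ξ_A)^i_B(φ^(1)(t)) for all t, then φ satisfies the classical Euler–Lagrange field equations: for each i, Σ_A ∂/∂t^A ( ∂L/∂v^i_A ∘ φ^(1) )(t) = ∂L/∂q^i(φ^(1)(t)). -/
open scoped BigOperators

noncomputable section

/- Auxiliary lemmas -/

lemma contDiff_fderiv_apply {E : Type*} [NormedAddCommGroup E] [NormedSpace ℝ E]
    {f : E → ℝ} (hf : ContDiff ℝ (⊤ : ℕ∞) f) (v : E) :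
    ContDiff ℝ (⊤ : ℕ∞) (fun x => fderiv ℝ f x v) := by
  have h1 : ContDiff ℝ (⊤ : ℕ∞) (fderiv ℝ f) := hf.fderiv_right (by simp)
  exact (ContinuousLinearMap.apply ℝ ℝ v).contDiff.comp h1

lemma fderiv_clm_comp' {E F G : Type*} [NormedAddCommGroup E] [NormedSpace ℝ E]
    [NormedAddCommGroup F] [NormedSpace ℝ F] [NormedAddCommGroup G] [NormedSpace ℝ G]
    (ℓ : F →L[ℝ] G) {f : E → F} {x : E} (hf : DifferentiableAt ℝ f x) :
    fderiv ℝ (fun y => ℓ (f y)) x = ℓ.comp (fderiv ℝ f x) :=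
  (ℓ.hasFDerivAt.comp x hf.hasFDerivAt).fderiv

lemma pT_swap {k : ℕ} {f : (Fin k → ℝ) → ℝ} (hf : ContDiff ℝ (⊤ : ℕ∞) f) (A B : Fin k) (t : Fin k → ℝ) :
    pT (fun s => pT f A s) B t = pT (fun s => pT f B s) A t := by
  have hd : ContDiff ℝ (⊤ : ℕ∞) (fderiv ℝ f) := hf.fderiv_right (by simp)
  have key : ∀ (v w : Fin k → ℝ),
      fderiv ℝ (fun s => fderiv ℝ f s v) t w = fderiv ℝ (fderiv ℝ f) t w v := by
    intro v w
    rw [show (fun s => fderiv ℝ f s v)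
        = (fun s => (ContinuousLinearMap.apply ℝ ℝ v) (fderiv ℝ f s)) from rfl,
      fderiv_clm_comp' (ContinuousLinearMap.apply ℝ ℝ v) ((hd.differentiable (by simp)) t)]
    rfl
  have hsym : ∀ v w, fderiv ℝ (fderiv ℝ f) t v w = fderiv ℝ (fderiv ℝ f) t w v :=
    hf.contDiffAt.isSymmSndFDerivAt (by norm_num; exact WithTop.coe_le_coe.2 (le_top : (2:ℕ∞) ≤ ⊤))
  simp only [pT, key]
  exact hsym _ _

lemma pair_decomp {n m k : ℕ} (u : Fin n → ℝ) (w : Fin m → Fin k → ℝ) :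
    ((u, w) : KPt n m k)
      = (∑ j, u j • ((Pi.single j 1 : Fin n → ℝ), (0 : Fin m → Fin k → ℝ)))
        + ∑ j, ∑ B, w j B • ((0 : Fin n → ℝ),
            (Pi.single j (Pi.single B 1) : Fin m → Fin k → ℝ)) := by
  refine Prod.ext ?_ ?_
  · simp only [Prod.fst_add, Prod.fst_sum, Prod.smul_fst]
    funext x
    simp [Finset.sum_apply, Pi.single_apply]
  · simp only [Prod.snd_add, Prod.snd_sum, Prod.smul_snd]
    funext x y
    simp [Finset.sum_apply, Pi.single_apply]

lemma clm_eval {n m k : ℕ} (ℓ : KPt n m k →L[ℝ] ℝ) (u : Fin n → ℝ) (w : Fin m → Fin k → ℝ) :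
    ℓ (u, w) = (∑ j, u j * ℓ ((Pi.single j 1 : Fin n → ℝ), 0))
      + ∑ j, ∑ B, w j B * ℓ ((0 : Fin n → ℝ), Pi.single j (Pi.single B 1)) := by
  conv_lhs => rw [pair_decomp u w]
  simp only [map_add, map_sum, map_smul, smul_eq_mul]

/-- Standard case `E = TQ`: the k-symplectic Lagrangian formalism.
A solution of `Σ_A i_{ξ_A} ω^A_L = dE_L` is a SOPDE whose integral sections solve the
classical Euler–Lagrange field equations. -/
theorem stmt2 {n k : ℕ} (L : KPt n n k → ℝ) (hL : ContDiff ℝ (⊤ : ℕ∞) L) (hreg : RegularL L)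
    (ξ : Fin n → Fin k → KPt n n k → ℝ) (ξ2 : Fin k → Fin n → Fin k → KPt n n k → ℝ)
    (hξ : ∀ i A, ContDiff ℝ (⊤ : ℕ∞) (ξ i A)) (hξ2 : ∀ A i B, ContDiff ℝ (⊤ : ℕ∞) (ξ2 A i B))
    (heq1 : ∀ (p : KPt n n k) (j : Fin n),
      (∑ A : Fin k, ∑ i : Fin n, ξ i A p * (pQ (pY L i A) j p - pQ (pY L j A) i p))
        - (∑ A : Fin k, ∑ B : Fin k, ∑ i : Fin n, ξ2 A i B p * pY (pY L j A) i B p)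
      = (∑ A : Fin k, ∑ i : Fin n, p.2 i A * pQ (pY L i A) j p) - pQ L j p)
    (heq2 : ∀ (p : KPt n n k) (l : Fin n) (B : Fin k),
      (∑ A : Fin k, ∑ i : Fin n, ξ i A p * pY (pY L i A) l B p)
      = ∑ A : Fin k, ∑ i : Fin n, p.2 i A * pY (pY L i A) l B p) :
    (∀ (i : Fin n) (A : Fin k) (p : KPt n n k), ξ i A p = p.2 i A) ∧
    (∀ (φ : (Fin k → ℝ) → Fin n → ℝ) (φ1 : (Fin k → ℝ) → KPt n n k),
      ContDiff ℝ (⊤ : ℕ∞) φ →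
      (∀ t, φ1 t = (φ t, fun i A => pT (fun s => φ s i) A t)) →
      (∀ (i : Fin n) (A B : Fin k) (t : Fin k → ℝ),
        pT (fun s => pT (fun u => φ u i) A s) B t = ξ2 A i B (φ1 t)) →
      ∀ (i : Fin n) (t : Fin k → ℝ),
        (∑ A : Fin k, pT (fun s => pY L i A (φ1 s)) A t) = pQ L i (φ1 t)) := by
  have part1 : ∀ (i : Fin n) (A : Fin k) (p : KPt n n k), ξ i A p = p.2 i A := by
    intro i A p
    have hM := hreg p
    have hinj : Function.Injective
        (Matrix.of (fun a b : Fin n × Fin k => pY (pY L b.1 b.2) a.1 a.2 p) :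
          Matrix (Fin n × Fin k) (Fin n × Fin k) ℝ).mulVec :=
      Matrix.mulVec_injective_iff_isUnit.2 hM
    have h0 : (Matrix.of (fun a b : Fin n × Fin k => pY (pY L b.1 b.2) a.1 a.2 p) :
          Matrix (Fin n × Fin k) (Fin n × Fin k) ℝ).mulVec (fun b => ξ b.1 b.2 p)
        = (Matrix.of (fun a b : Fin n × Fin k => pY (pY L b.1 b.2) a.1 a.2 p) :
          Matrix (Fin n × Fin k) (Fin n × Fin k) ℝ).mulVec (fun b => p.2 b.1 b.2) := by
      funext a
      obtain ⟨l, B⟩ := a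
      have h2 := heq2 p l B
      rw [Finset.sum_comm] at h2
      rw [show (∑ A : Fin k, ∑ i : Fin n, p.2 i A * pY (pY L i A) l B p)
        = ∑ i : Fin n, ∑ A : Fin k, p.2 i A * pY (pY L i A) l B p from Finset.sum_comm] at h2
      simpa [Matrix.mulVec, dotProduct, Fintype.sum_prod_type, mul_comm] using h2
    exact congrFun (hinj h0) (i, A)
  refine ⟨part1, ?_⟩
  intro φ φ1 hφ hφ1 hsol i t
  have hφj : ∀ j, ContDiff ℝ (⊤ : ℕ∞) (fun u => φ u j) := fun j => (contDiff_pi.1 hφ) j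
  have hψ : ∀ j B, ContDiff ℝ (⊤ : ℕ∞) (fun s => pT (fun u => φ u j) B s) := by
    intro j B
    exact contDiff_fderiv_apply (hφj j) _
  have hφ1' : φ1 = fun s => ((φ s, fun j B => pT (fun u => φ u j) B s) : KPt n n k) :=
    funext hφ1
  have hφ1smooth : ContDiff ℝ (⊤ : ℕ∞) φ1 := by
    rw [hφ1']
    exact hφ.prodMk (contDiff_pi.2 fun j => contDiff_pi.2 fun B => hψ j B)
  have hdiff : DifferentiableAt ℝ φ1 t := (hφ1smooth.differentiable (by simp)) t
  set p := φ1 t with hp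
  have hg : ∀ (j : Fin n) (A : Fin k), ContDiff ℝ (⊤ : ℕ∞) (pY L j A) := fun j A =>
    contDiff_fderiv_apply hL _
  -- components of the derivative of φ1
  have hD1 : ∀ (A : Fin k) (j : Fin n),
      ((fderiv ℝ φ1 t) (Pi.single A 1)).1 j = pT (fun u => φ u j) A t := by
    intro A j
    set ℓ : KPt n n k →L[ℝ] ℝ :=
      (ContinuousLinearMap.proj j).comp (ContinuousLinearMap.fst ℝ (Fin n → ℝ) (Fin n → Fin k → ℝ)) with hℓ
    have hfun : (fun y => ℓ (φ1 y)) = fun s => φ s j := by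
      funext s
      simp [hℓ, hφ1 s]
    calc ((fderiv ℝ φ1 t) (Pi.single A 1)).1 j
        = (ℓ.comp (fderiv ℝ φ1 t)) (Pi.single A 1) := rfl
      _ = fderiv ℝ (fun y => ℓ (φ1 y)) t (Pi.single A 1) := by rw [fderiv_clm_comp' ℓ hdiff]
      _ = pT (fun u => φ u j) A t := by rw [hfun]; rfl
  have hD2 : ∀ (A : Fin k) (j : Fin n) (B : Fin k),
      ((fderiv ℝ φ1 t) (Pi.single A 1)).2 j B = ξ2 A j B p := by
    intro A j B
    set ℓ : KPt n n k →L[ℝ] ℝ :=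
      (ContinuousLinearMap.proj B).comp ((ContinuousLinearMap.proj j).comp
        (ContinuousLinearMap.snd ℝ (Fin n → ℝ) (Fin n → Fin k → ℝ))) with hℓ
    have hfun : (fun y => ℓ (φ1 y)) = fun s => pT (fun u => φ u j) B s := by
      funext s
      simp [hℓ, hφ1 s]
    calc ((fderiv ℝ φ1 t) (Pi.single A 1)).2 j B
        = (ℓ.comp (fderiv ℝ φ1 t)) (Pi.single A 1) := rfl
      _ = fderiv ℝ (fun y => ℓ (φ1 y)) t (Pi.single A 1) := by rw [fderiv_clm_comp' ℓ hdiff]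
      _ = pT (fun s => pT (fun u => φ u j) B s) A t := by rw [hfun]; rfl
      _ = pT (fun s => pT (fun u => φ u j) A s) B t := pT_swap (hφj j) B A t
      _ = ξ2 A j B p := hsol j A B t
  have hv : ∀ (j : Fin n) (A : Fin k), pT (fun u => φ u j) A t = p.2 j A := by
    intro j A
    rw [hp, hφ1 t]
  have hterm : ∀ A : Fin k,
      pT (fun s => pY L i A (φ1 s)) A t
        = (∑ j, p.2 j A * pQ (pY L i A) j p)
          + ∑ j, ∑ B, ξ2 A j B p * pY (pY L i A) j B p := by
    intro A
    have hgd : DifferentiableAt ℝ (pY L i A) p := ((hg i A).differentiable (by simp)) p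
    have hcomp : pT (fun s => pY L i A (φ1 s)) A t
        = fderiv ℝ (pY L i A) p (fderiv ℝ φ1 t (Pi.single A 1)) := by
      have h := fderiv_comp t hgd hdiff
      simp only [pT]
      rw [show (fun s => pY L i A (φ1 s)) = (pY L i A) ∘ φ1 from rfl, h]
      rfl
    rw [hcomp]
    rw [show fderiv ℝ φ1 t (Pi.single A 1)
        = (((fderiv ℝ φ1 t) (Pi.single A 1)).1, ((fderiv ℝ φ1 t) (Pi.single A 1)).2) from rfl,
      clm_eval]
    congr 1
    · exact Finset.sum_congr rfl fun j _ => by rw [hD1, hv]; rfl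
    · exact Finset.sum_congr rfl fun j _ => Finset.sum_congr rfl fun B _ => by rw [hD2]; rfl
  have key := heq1 p i
  simp only [part1] at key
  simp only [mul_sub, Finset.sum_sub_distrib] at key
  calc ∑ A : Fin k, pT (fun s => pY L i A (φ1 s)) A t
      = ∑ A : Fin k, ((∑ j, p.2 j A * pQ (pY L i A) j p)
          + ∑ j, ∑ B, ξ2 A j B p * pY (pY L i A) j B p) :=
        Finset.sum_congr rfl fun A _ => hterm A
    _ = (∑ A : Fin k, ∑ j, p.2 j A * pQ (pY L i A) j p)
          + ∑ A : Fin k, ∑ B : Fin k, ∑ j, ξ2 A j B p * pY (pY L i A) j B p := by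
        rw [Finset.sum_add_distrib]
        exact congrArg _ (Finset.sum_congr rfl fun A _ => Finset.sum_comm)
    _ = pQ L i p := by linarith [key]
end
end

section
/- Let L : ℝ^n × ℝ^{m·k} → ℝ be smooth and let ρ^i_α : ℝ^n → ℝ be smooth. Suppose the Legendre transformation Leg(q, y) = (q^i, ∂L/∂y^α_A(q, y)) is a C^∞ diffeomorphism of ℝ^n × ℝ^{m·k}. Then the prolonged map 𝒯Leg : ℝ^n × ℝ^{m·k} × ℝ^m × ℝ^{m·k} → ℝ^n × ℝ^{m·k} × ℝ^m × ℝ^{m·k} defined by 𝒯Leg(q, y, z, w) = ( Leg(q, y), z, w̃ ), where w̃^C_γ = Σ_{α,i} z^α ρ^i_α(q) ∂²L/∂q^i∂y^γ_C(q, y) + Σ_{β,B} w^β_B ∂²L/∂y^γ_C∂y^β_B(q, y), is a C^∞ diffeomorphism. -/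
open scoped BigOperators

noncomputable section

namespace Stmt6Aux

lemma contDiff_dirderiv {E F : Type*} [NormedAddCommGroup E] [NormedSpace ℝ E]
    [NormedAddCommGroup F] [NormedSpace ℝ F]
    {f : E → F} (hf : ContDiff ℝ (⊤ : ℕ∞) f) (v : E) :
    ContDiff ℝ (⊤ : ℕ∞) fun p => fderiv ℝ f p v :=
  (ContinuousLinearMap.apply ℝ F v).contDiff.comp (hf.fderiv_right (by simp))

variable {n m k : ℕ}

lemma smooth_pY {L : KPt n m k → ℝ} (hL : ContDiff ℝ (⊤ : ℕ∞) L) (γ : Fin m) (Cc : Fin k) :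
    ContDiff ℝ (⊤ : ℕ∞) (pY L γ Cc) := contDiff_dirderiv hL _

lemma smooth_Leg {L : KPt n m k → ℝ} (hL : ContDiff ℝ (⊤ : ℕ∞) L) :
    ContDiff ℝ (⊤ : ℕ∞) (Leg L) :=
  contDiff_fst.prodMk (contDiff_pi.2 fun γ => contDiff_pi.2 fun Cc => smooth_pY hL γ Cc)

lemma fderiv_Leg {L : KPt n m k → ℝ} (hL : ContDiff ℝ (⊤ : ℕ∞) L) (p v : KPt n m k) :
    fderiv ℝ (Leg L) p v = (v.1, fun γ Cc => fderiv ℝ (pY L γ Cc) p v) := by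
  have h : HasFDerivAt (Leg L)
      ((ContinuousLinearMap.fst ℝ (Fin n → ℝ) (Fin m → Fin k → ℝ)).prod
        (ContinuousLinearMap.pi fun γ => ContinuousLinearMap.pi fun Cc =>
          fderiv ℝ (pY L γ Cc) p)) p := by
    refine HasFDerivAt.prodMk hasFDerivAt_fst ?_
    exact hasFDerivAt_pi.2 fun γ => hasFDerivAt_pi.2 fun Cc =>
      (((smooth_pY hL γ Cc).differentiable (by simp)) p).hasFDerivAt
  rw [h.fderiv]; rfl

lemma d2_eq {L : KPt n m k → ℝ} (hL : ContDiff ℝ (⊤ : ℕ∞) L) (p u v : KPt n m k) :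
    fderiv ℝ (fun q => fderiv ℝ L q u) p v = fderiv ℝ (fderiv ℝ L) p v u := by
  have h := fderiv_comp (𝕜 := ℝ) p (ContinuousLinearMap.apply ℝ ℝ u).differentiableAt
      ((hL.fderiv_right (m := (⊤ : ℕ∞)) (by simp)).differentiable (by simp) p)
  calc fderiv ℝ (fun q => fderiv ℝ L q u) p v
      = fderiv ℝ ((ContinuousLinearMap.apply ℝ ℝ u) ∘ (fderiv ℝ L)) p v := rfl
    _ = fderiv ℝ (fderiv ℝ L) p v u := by
        rw [h, ContinuousLinearMap.fderiv]; rfl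

lemma pY_symm {L : KPt n m k → ℝ} (hL : ContDiff ℝ (⊤ : ℕ∞) L) (β γ : Fin m) (B Cc : Fin k)
    (p : KPt n m k) : pY (pY L β B) γ Cc p = pY (pY L γ Cc) β B p := by
  have hsym := (hL.contDiffAt (x := p)).isSymmSndFDerivAt (by simp [minSmoothness_of_isRCLikeNormedField]; exact WithTop.coe_le_coe.2 le_top)
  show fderiv ℝ (pY L β B) p _ = fderiv ℝ (pY L γ Cc) p _
  rw [show pY L β B = fun q => fderiv ℝ L q (0, Pi.single β (Pi.single B 1)) from rfl,
    show pY L γ Cc = fun q => fderiv ℝ L q (0, Pi.single γ (Pi.single Cc 1)) from rfl,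
    d2_eq hL, d2_eq hL, hsym.eq]

/-- decomposition of a vector in `KPt` as a sum of basis vectors -/
lemma vec_decomp (u : Fin n → ℝ) (w : Fin m → Fin k → ℝ) :
    ((u, w) : KPt n m k)
      = (∑ i, u i • ((Pi.single i 1, 0) : KPt n m k))
        + ∑ β, ∑ B, w β B • ((0, Pi.single β (Pi.single B 1)) : KPt n m k) := by
  refine Prod.ext ?_ ?_ <;>
    simp [Prod.fst_sum, Prod.snd_sum, funext_iff, Pi.single_apply, Finset.sum_apply,
      Finset.sum_ite_eq', mul_comm]

lemma clm_decomp (Φ : KPt n m k →L[ℝ] ℝ) (u : Fin n → ℝ) (w : Fin m → Fin k → ℝ) :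
    Φ (u, w) = (∑ i, u i * Φ (Pi.single i 1, 0))
      + ∑ β, ∑ B, w β B * Φ (0, Pi.single β (Pi.single B 1)) := by
  rw [vec_decomp u w, map_add, map_sum]
  simp only [map_sum, map_smul, smul_eq_mul]

lemma fderiv_pY_apply {L : KPt n m k → ℝ} (hL : ContDiff ℝ (⊤ : ℕ∞) L) (γ : Fin m) (Cc : Fin k)
    (p : KPt n m k) (u : Fin n → ℝ) (w : Fin m → Fin k → ℝ) :
    fderiv ℝ (pY L γ Cc) p (u, w)
      = (∑ i, u i * pQ (pY L γ Cc) i p) + ∑ β, ∑ B, w β B * pY (pY L β B) γ Cc p := by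
  rw [clm_decomp]
  congr 1
  refine Finset.sum_congr rfl fun β _ => Finset.sum_congr rfl fun B _ => ?_
  rw [show (fderiv ℝ (pY L γ Cc) p) (0, Pi.single β (Pi.single B 1))
      = pY (pY L γ Cc) β B p from rfl, pY_symm hL]

end Stmt6Aux

namespace Stmt6Aux
variable {n m k : ℕ}

lemma chain_GL {L : KPt n m k → ℝ} {G : KPt n m k → KPt n m k}
    (hL : ContDiff ℝ (⊤ : ℕ∞) L) (hG : ContDiff ℝ (⊤ : ℕ∞) G)
    (hGL : Function.LeftInverse G (Leg L)) (p v : KPt n m k) :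
    fderiv ℝ G (Leg L p) (fderiv ℝ (Leg L) p v) = v := by
  have h := fderiv_comp (𝕜 := ℝ) p ((hG.differentiable (by simp)) (Leg L p))
      ((smooth_Leg hL).differentiable (by simp) p)
  have hid : G ∘ Leg L = id := funext hGL
  rw [hid, fderiv_id] at h
  exact (DFunLike.congr_fun h v).symm

lemma chain_LG {L : KPt n m k → ℝ} {G : KPt n m k → KPt n m k}
    (hL : ContDiff ℝ (⊤ : ℕ∞) L) (hG : ContDiff ℝ (⊤ : ℕ∞) G)
    (hLG : Function.RightInverse G (Leg L)) (p' v : KPt n m k) :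
    fderiv ℝ (Leg L) (G p') (fderiv ℝ G p' v) = v := by
  have h := fderiv_comp (𝕜 := ℝ) p' (((smooth_Leg hL).differentiable (by simp)) (G p'))
      ((hG.differentiable (by simp)) p')
  have hid : Leg L ∘ G = id := funext hLG
  rw [hid, fderiv_id] at h
  exact (DFunLike.congr_fun h v).symm

lemma fderiv_G_fst {L : KPt n m k → ℝ} {G : KPt n m k → KPt n m k}
    (hG : ContDiff ℝ (⊤ : ℕ∞) G) (hLG : Function.RightInverse G (Leg L))
    (p' v : KPt n m k) : (fderiv ℝ G p' v).1 = v.1 := by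
  have h := fderiv_comp (𝕜 := ℝ) p' (differentiableAt_fst (p := G p'))
      ((hG.differentiable (by simp)) p')
  have h2 : (Prod.fst ∘ G) = (Prod.fst : KPt n m k → (Fin n → ℝ)) := by
    funext q
    show (G q).1 = q.1
    conv_rhs => rw [← hLG q]
    rfl
  rw [h2] at h
  rw [fderiv_fst, fderiv_fst] at h
  exact (DFunLike.congr_fun h v).symm

end Stmt6Aux


/-- If the Legendre transformation of `L` is a global `C^∞` diffeomorphism,
then the prolonged Legendre map `𝒯^E Leg` is a `C^∞` diffeomorphism. -/
theorem stmt6 {n m k : ℕ} (L : KPt n m k → ℝ) (hL : ContDiff ℝ (⊤ : ℕ∞) L)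
    (ρ : Fin n → Fin m → (Fin n → ℝ) → ℝ) (hρ : ∀ i α, ContDiff ℝ (⊤ : ℕ∞) (ρ i α))
    (G : KPt n m k → KPt n m k) (hG : ContDiff ℝ (⊤ : ℕ∞) G)
    (hGL : Function.LeftInverse G (Leg L)) (hLG : Function.RightInverse G (Leg L))
    (TLeg : KPt n m k × (Fin m → ℝ) × (Fin m → Fin k → ℝ)
          → KPt n m k × (Fin m → ℝ) × (Fin m → Fin k → ℝ))
    (hTLeg : ∀ (p : KPt n m k) (z : Fin m → ℝ) (w : Fin m → Fin k → ℝ),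
      TLeg (p, z, w) = (Leg L p, z, fun γ Cc =>
        (∑ α : Fin m, ∑ i : Fin n, z α * ρ i α p.1 * pQ (pY L γ Cc) i p)
          + ∑ β : Fin m, ∑ B : Fin k, w β B * pY (pY L β B) γ Cc p)) :
    ContDiff ℝ (⊤ : ℕ∞) TLeg ∧
    ∃ S : KPt n m k × (Fin m → ℝ) × (Fin m → Fin k → ℝ)
        → KPt n m k × (Fin m → ℝ) × (Fin m → Fin k → ℝ),
      ContDiff ℝ (⊤ : ℕ∞) S ∧ Function.LeftInverse S TLeg ∧ Function.RightInverse S TLeg := by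

  have hform : ∀ (p : KPt n m k) (z : Fin m → ℝ) (w : Fin m → Fin k → ℝ),
      TLeg (p, z, w) = (Leg L p, z,
        (fderiv ℝ (Leg L) p ((fun i => ∑ α : Fin m, z α * ρ i α p.1), w)).2) := by
    intro p z w
    rw [hTLeg]
    refine congrArg (Prod.mk _) (congrArg (Prod.mk _) ?_)
    funext γ Cc
    have h2 : (fderiv ℝ (Leg L) p ((fun i => ∑ α : Fin m, z α * ρ i α p.1), w)).2 γ Cc
        = fderiv ℝ (pY L γ Cc) p ((fun i => ∑ α : Fin m, z α * ρ i α p.1), w) := by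
      rw [Stmt6Aux.fderiv_Leg hL]
    rw [h2, Stmt6Aux.fderiv_pY_apply hL]
    congr 1
    calc ∑ α : Fin m, ∑ i : Fin n, z α * ρ i α p.1 * pQ (pY L γ Cc) i p
        = ∑ i : Fin n, ∑ α : Fin m, z α * ρ i α p.1 * pQ (pY L γ Cc) i p :=
          Finset.sum_comm
      _ = ∑ i : Fin n, (∑ α : Fin m, z α * ρ i α p.1) * pQ (pY L γ Cc) i p :=
          Finset.sum_congr rfl fun i _ => (Finset.sum_mul _ _ _).symm
  have hTfun : TLeg = fun x => (Leg L x.1, x.2.1,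
      (fderiv ℝ (Leg L) x.1 ((fun i => ∑ α : Fin m, x.2.1 α * ρ i α x.1.1), x.2.2)).2) := by
    funext x
    obtain ⟨p, z, w⟩ := x
    exact hform p z w
  refine ⟨?_, fun x => (G x.1, x.2.1,
      (fderiv ℝ G x.1 ((fun i => ∑ α : Fin m, x.2.1 α * ρ i α (G x.1).1), x.2.2)).2),
      ?_, ?_, ?_⟩
  · rw [hTfun]
    have hq1 : ContDiff ℝ (⊤ : ℕ∞) (fun x : KPt n m k × (Fin m → ℝ) × (Fin m → Fin k → ℝ) =>
        x.1.1) := contDiff_fst.comp contDiff_fst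
    have hz : ContDiff ℝ (⊤ : ℕ∞) (fun x : KPt n m k × (Fin m → ℝ) × (Fin m → Fin k → ℝ) =>
        x.2.1) := contDiff_fst.comp contDiff_snd
    have hu : ContDiff ℝ (⊤ : ℕ∞) (fun x : KPt n m k × (Fin m → ℝ) × (Fin m → Fin k → ℝ) =>
        (fun i => ∑ α : Fin m, x.2.1 α * ρ i α x.1.1)) :=
      contDiff_pi.2 fun i => ContDiff.sum fun α _ =>
        ((contDiff_pi.1 hz α).mul ((hρ i α).comp hq1))
    have hvec := hu.prodMk (contDiff_snd.comp contDiff_snd)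
    have hD : ContDiff ℝ (⊤ : ℕ∞) (fun x : KPt n m k × (Fin m → ℝ) × (Fin m → Fin k → ℝ) =>
        fderiv ℝ (Leg L) x.1) :=
      ((Stmt6Aux.smooth_Leg hL).fderiv_right (by simp)).comp contDiff_fst
    exact ((Stmt6Aux.smooth_Leg hL).comp contDiff_fst).prodMk
      (hz.prodMk ((hD.clm_apply hvec).snd))
  · have hq1 : ContDiff ℝ (⊤ : ℕ∞) (fun x : KPt n m k × (Fin m → ℝ) × (Fin m → Fin k → ℝ) =>
        (G x.1).1) := contDiff_fst.comp (hG.comp contDiff_fst)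
    have hz : ContDiff ℝ (⊤ : ℕ∞) (fun x : KPt n m k × (Fin m → ℝ) × (Fin m → Fin k → ℝ) =>
        x.2.1) := contDiff_fst.comp contDiff_snd
    have hu : ContDiff ℝ (⊤ : ℕ∞) (fun x : KPt n m k × (Fin m → ℝ) × (Fin m → Fin k → ℝ) =>
        (fun i => ∑ α : Fin m, x.2.1 α * ρ i α (G x.1).1)) :=
      contDiff_pi.2 fun i => ContDiff.sum fun α _ =>
        ((contDiff_pi.1 hz α).mul ((hρ i α).comp hq1))
    have hvec := hu.prodMk (contDiff_snd.comp contDiff_snd)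
    have hD : ContDiff ℝ (⊤ : ℕ∞) (fun x : KPt n m k × (Fin m → ℝ) × (Fin m → Fin k → ℝ) =>
        fderiv ℝ G x.1) := (hG.fderiv_right (by simp)).comp contDiff_fst
    exact ((hG.comp contDiff_fst)).prodMk (hz.prodMk ((hD.clm_apply hvec).snd))
  · intro x
    obtain ⟨p, z, w⟩ := x
    rw [hform p z w]
    show (G (Leg L p), z,
      (fderiv ℝ G (Leg L p)
        ((fun i => ∑ α : Fin m, z α * ρ i α (G (Leg L p)).1),
         (fderiv ℝ (Leg L) p ((fun i => ∑ α : Fin m, z α * ρ i α p.1), w)).2)).2) = (p, z, w)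
    rw [hGL p]
    have key : (((fun i => ∑ α : Fin m, z α * ρ i α p.1),
        (fderiv ℝ (Leg L) p ((fun i => ∑ α : Fin m, z α * ρ i α p.1), w)).2) : KPt n m k)
        = fderiv ℝ (Leg L) p ((fun i => ∑ α : Fin m, z α * ρ i α p.1), w) := by
      refine Prod.ext ?_ rfl
      rw [Stmt6Aux.fderiv_Leg hL]
    rw [key, Stmt6Aux.chain_GL hL hG hGL p ((fun i => ∑ α : Fin m, z α * ρ i α p.1), w)]
  · intro x
    obtain ⟨p', z, w'⟩ := x
    show TLeg (G p', z,
      (fderiv ℝ G p' ((fun i => ∑ α : Fin m, z α * ρ i α (G p').1), w')).2) = (p', z, w')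
    rw [hform (G p') z
      ((fderiv ℝ G p' ((fun i => ∑ α : Fin m, z α * ρ i α (G p').1), w')).2)]
    rw [hLG p']
    have key : (((fun i => ∑ α : Fin m, z α * ρ i α (G p').1),
        (fderiv ℝ G p' ((fun i => ∑ α : Fin m, z α * ρ i α (G p').1), w')).2) : KPt n m k)
        = fderiv ℝ G p' ((fun i => ∑ α : Fin m, z α * ρ i α (G p').1), w') := by
      refine Prod.ext ?_ rfl
      show ((fun i => ∑ α : Fin m, z α * ρ i α (G p').1, w') : KPt n m k).1
          = (fderiv ℝ G p' ((fun i => ∑ α : Fin m, z α * ρ i α (G p').1), w')).1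
      exact (Stmt6Aux.fderiv_G_fst hG hLG p'
        ((fun i => ∑ α : Fin m, z α * ρ i α (G p').1), w')).symm
    rw [key, Stmt6Aux.chain_LG hL hG hLG p'
      ((fun i => ∑ α : Fin m, z α * ρ i α (G p').1), w')]
end
end

section
/- Let L : ℝ^n × ℝ^{m·k} → ℝ be smooth with Legendre transformation Leg(q, y) = (q^i, ∂L/∂y^α_A(q, y)) a C^∞ diffeomorphism, let ρ^i_α, C^γ_{αβ} : ℝ^n → ℝ be structure functions, and set H = E_L ∘ Leg^{-1} where E_L(q,y) = Σ_{A,α} y^α_A ∂L/∂y^α_A − L. Let η = (η^i, η^α_A) : ℝ^k → ℝ^n × ℝ^{m·k} be smooth and satisfy, for all t: ∂η^i/∂t^A = Σ_α ρ^i_α(η(t)) η^α_A(t), and, for each α: Σ_A ∂/∂t^A ( ∂L/∂y^α_A ∘ η )(t) = Σ_i ρ^i_α(η(t)) ∂L/∂q^i(η(t)) + Σ_{C,β,γ} η^β_C(t) C^γ_{βα}(η(t)) ∂L/∂y^γ_C(η(t)). Then ψ := Leg ∘ η satisfies the Hamilton equations on Lie algebroids: ∂ψ^i/∂t^A = Σ_α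 ρ^i_α(ψ(t)) ∂H/∂y^A_α(ψ(t)) for all i, A, and Σ_A ∂ψ^A_α/∂t^A = −( Σ_{β,δ,B} C^δ_{αβ}(ψ(t)) ψ^B_δ(t) ∂H/∂y^B_β(ψ(t)) + Σ_i ρ^i_α(ψ(t)) ∂H/∂q^i(ψ(t)) ) for each α. -/
open scoped BigOperators

noncomputable section

lemma contDiff_pY {n m k : ℕ} {L : KPt n m k → ℝ} (hL : ContDiff ℝ (⊤ : ℕ∞) L) (α : Fin m) (A : Fin k) :
    ContDiff ℝ (⊤ : ℕ∞) (pY L α A) := by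
  unfold pY
  exact (hL.fderiv_right (by simp)).clm_apply contDiff_const

/-- decomposition of a continuous linear functional on `KPt` -/
lemma clm_decomp {n m k : ℕ} (T : KPt n m k →L[ℝ] ℝ) (v : KPt n m k) :
    T v = (∑ i, v.1 i * T ((Pi.single i 1 : Fin n → ℝ), 0))
      + ∑ α, ∑ A, v.2 α A * T ((0 : Fin n → ℝ), (Pi.single α (Pi.single A 1) : Fin m → Fin k → ℝ)) := by
  have hv : v = ((∑ i, v.1 i • (((Pi.single i 1 : Fin n → ℝ), (0 : Fin m → Fin k → ℝ)) : KPt n m k))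
      + ∑ α : Fin m, ∑ A : Fin k, v.2 α A •
        (((0 : Fin n → ℝ), (Pi.single α (Pi.single A 1) : Fin m → Fin k → ℝ)) : KPt n m k)) := by
    refine Prod.ext ?_ ?_
    · funext j
      simp [Prod.fst_sum, Finset.sum_apply, Pi.single_apply]
    · funext β B
      simp [Prod.snd_sum, Finset.sum_apply, Pi.single_apply, ite_apply, Finset.sum_ite_eq]
  conv_lhs => rw [hv]
  rw [map_add, map_sum, map_sum]
  congr 1
  · exact Finset.sum_congr rfl fun i _ => by rw [map_smul, smul_eq_mul]
  · refine Finset.sum_congr rfl fun α _ => ?_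
    rw [map_sum]
    exact Finset.sum_congr rfl fun A _ => by rw [map_smul, smul_eq_mul]

/-- derivative of the Legendre transform -/
noncomputable def LegD {n m k : ℕ} (L : KPt n m k → ℝ) (p : KPt n m k) : KPt n m k →L[ℝ] KPt n m k :=
  (ContinuousLinearMap.fst ℝ _ _).prod
    (ContinuousLinearMap.pi fun α => ContinuousLinearMap.pi fun A => fderiv ℝ (pY L α A) p)

lemma leg_hasFDerivAt {n m k : ℕ} {L : KPt n m k → ℝ} (hL : ContDiff ℝ (⊤ : ℕ∞) L) (p : KPt n m k) :
    HasFDerivAt (Leg L) (LegD L p) p := by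
  refine HasFDerivAt.prodMk (hasFDerivAt_fst) ?_
  apply hasFDerivAt_pi''
  intro α
  rw [ContinuousLinearMap.proj_pi]
  apply hasFDerivAt_pi''
  intro A
  rw [ContinuousLinearMap.proj_pi]
  exact (((contDiff_pY hL α A).differentiable (by simp)) p).hasFDerivAt

lemma legD_apply_fst {n m k : ℕ} (L : KPt n m k → ℝ) (p v : KPt n m k) :
    (LegD L p v).1 = v.1 := rfl

lemma legD_apply_snd {n m k : ℕ} (L : KPt n m k → ℝ) (p v : KPt n m k) (α : Fin m) (A : Fin k) :
    (LegD L p v).2 α A = fderiv ℝ (pY L α A) p v := rfl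

/-- the coordinate functional `p ↦ p.2 α A` -/
noncomputable def pjY {n m k : ℕ} (α : Fin m) (A : Fin k) : KPt n m k →L[ℝ] ℝ :=
  ((ContinuousLinearMap.proj A).comp (ContinuousLinearMap.proj α)).comp
    (ContinuousLinearMap.snd ℝ (Fin n → ℝ) (Fin m → Fin k → ℝ))

lemma energy_hasFDerivAt {n m k : ℕ} {L : KPt n m k → ℝ} (hL : ContDiff ℝ (⊤ : ℕ∞) L) (p : KPt n m k) :
    HasFDerivAt (EnergyL L)
      ((∑ A : Fin k, ∑ α : Fin m,
          (p.2 α A • fderiv ℝ (pY L α A) p + pY L α A p • pjY α A)) - fderiv ℝ L p) p := by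
  apply HasFDerivAt.sub
  · apply HasFDerivAt.fun_sum
    intro A _
    apply HasFDerivAt.fun_sum
    intro α _
    exact HasFDerivAt.mul ((pjY α A).hasFDerivAt)
      ((((contDiff_pY hL α A).differentiable (by simp)) p).hasFDerivAt)
  · exact ((hL.differentiable (by simp)) p).hasFDerivAt

lemma energy_fderiv_apply {n m k : ℕ} {L : KPt n m k → ℝ} (hL : ContDiff ℝ (⊤ : ℕ∞) L)
    (p v : KPt n m k) :
    fderiv ℝ (EnergyL L) p v
      = (∑ A : Fin k, ∑ α : Fin m, p.2 α A * fderiv ℝ (pY L α A) p v)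
        - ∑ i, v.1 i * pQ L i p := by
  rw [(energy_hasFDerivAt hL p).fderiv]
  have hLd : fderiv ℝ L p v = (∑ i, v.1 i * pQ L i p)
      + ∑ α, ∑ A, v.2 α A * pY L α A p := clm_decomp (fderiv ℝ L p) v
  have hcan : ∑ A : Fin k, ∑ α : Fin m, pY L α A p * v.2 α A
      = ∑ α : Fin m, ∑ A : Fin k, v.2 α A * pY L α A p := by
    rw [Finset.sum_comm]
    exact Finset.sum_congr rfl fun α _ => Finset.sum_congr rfl fun A _ => mul_comm _ _
  simp only [ContinuousLinearMap.sub_apply, ContinuousLinearMap.sum_apply,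
    ContinuousLinearMap.add_apply, ContinuousLinearMap.smul_apply, smul_eq_mul, hLd]
  have hpj : ∀ (α : Fin m) (A : Fin k), (pjY α A : KPt n m k →L[ℝ] ℝ) v = v.2 α A := fun _ _ => rfl
  simp only [hpj, Finset.sum_add_distrib]
  rw [hcan]
  ring

lemma contDiff_energy {n m k : ℕ} {L : KPt n m k → ℝ} (hL : ContDiff ℝ (⊤ : ℕ∞) L) :
    ContDiff ℝ (⊤ : ℕ∞) (EnergyL L) := by
  unfold EnergyL
  apply ContDiff.sub _ hL
  apply ContDiff.sum; intro A _
  apply ContDiff.sum; intro α _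
  exact ContDiff.mul ((pjY α A).contDiff) (contDiff_pY hL α A)

lemma key_fderivH {n m k : ℕ} {L : KPt n m k → ℝ} (hL : ContDiff ℝ (⊤ : ℕ∞) L)
    {G : KPt n m k → KPt n m k} (hG : ContDiff ℝ (⊤ : ℕ∞) G)
    (hGL : Function.LeftInverse G (Leg L)) (hLG : Function.RightInverse G (Leg L))
    {H : KPt n m k → ℝ} (hHdef : ∀ p, H p = EnergyL L (G p))
    (p w : KPt n m k) :
    fderiv ℝ H (Leg L p) w
      = (∑ A : Fin k, ∑ α : Fin m, p.2 α A * w.2 α A) - ∑ i, w.1 i * pQ L i p := by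
  have hH : ContDiff ℝ (⊤ : ℕ∞) H := by
    have : H = fun q => EnergyL L (G q) := funext hHdef
    rw [this]; exact (contDiff_energy hL).comp hG
  set v : KPt n m k := fderiv ℝ G (Leg L p) w with hv
  have hDG : HasFDerivAt G (fderiv ℝ G (Leg L p)) (Leg L p) :=
    ((hG.differentiable (by simp)) _).hasFDerivAt
  have hDLeg' : HasFDerivAt (Leg L) (LegD L p) (G (Leg L p)) := by
    rw [hGL p]; exact leg_hasFDerivAt hL p
  have hid : HasFDerivAt (fun q => Leg L (G q)) ((LegD L p).comp (fderiv ℝ G (Leg L p)))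
      (Leg L p) := hDLeg'.comp _ hDG
  have hid' : HasFDerivAt (fun q => Leg L (G q))
      (ContinuousLinearMap.id ℝ (KPt n m k)) (Leg L p) := by
    have : (fun q => Leg L (G q)) = id := funext hLG
    rw [this]; exact hasFDerivAt_id _
  have hvw : LegD L p v = w := by
    have := hid.unique hid'
    calc LegD L p v = ((LegD L p).comp (fderiv ℝ G (Leg L p))) w := rfl
      _ = w := by rw [this]; rfl
  have hDH : HasFDerivAt H (fderiv ℝ H (Leg L p)) (Leg L p) :=
    ((hH.differentiable (by simp)) _).hasFDerivAt
  have hE : HasFDerivAt (EnergyL L) ((fderiv ℝ H (Leg L p)).comp (LegD L p)) p := by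
    have hHL : (fun q => H (Leg L q)) = EnergyL L := funext fun q => by rw [hHdef, hGL]
    rw [← hHL]
    exact hDH.comp p (leg_hasFDerivAt hL p)
  have hEv : fderiv ℝ H (Leg L p) (LegD L p v) = fderiv ℝ (EnergyL L) p v := by
    rw [hE.fderiv]; rfl
  have h1 : v.1 = w.1 := by rw [← hvw]; rfl
  have h2 : ∀ (α : Fin m) (A : Fin k), fderiv ℝ (pY L α A) p v = w.2 α A := by
    intro α A; rw [← hvw]; rfl
  conv_lhs => rw [← hvw]
  rw [hEv, energy_fderiv_apply hL, h1]
  congr 1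
  exact Finset.sum_congr rfl fun A _ => Finset.sum_congr rfl fun α _ => by rw [h2]

lemma pY_H {n m k : ℕ} {L : KPt n m k → ℝ} (hL : ContDiff ℝ (⊤ : ℕ∞) L)
    {G : KPt n m k → KPt n m k} (hG : ContDiff ℝ (⊤ : ℕ∞) G)
    (hGL : Function.LeftInverse G (Leg L)) (hLG : Function.RightInverse G (Leg L))
    {H : KPt n m k → ℝ} (hHdef : ∀ p, H p = EnergyL L (G p))
    (p : KPt n m k) (α : Fin m) (A : Fin k) :
    pY H α A (Leg L p) = p.2 α A := by
  have := key_fderivH hL hG hGL hLG hHdef p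
    ((0 : Fin n → ℝ), (Pi.single α (Pi.single A 1) : Fin m → Fin k → ℝ))
  rw [pY, this]
  simp [Pi.single_apply, ite_apply, mul_ite, Finset.sum_ite_eq]

lemma pQ_H {n m k : ℕ} {L : KPt n m k → ℝ} (hL : ContDiff ℝ (⊤ : ℕ∞) L)
    {G : KPt n m k → KPt n m k} (hG : ContDiff ℝ (⊤ : ℕ∞) G)
    (hGL : Function.LeftInverse G (Leg L)) (hLG : Function.RightInverse G (Leg L))
    {H : KPt n m k → ℝ} (hHdef : ∀ p, H p = EnergyL L (G p))
    (p : KPt n m k) (i : Fin n) :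
    pQ H i (Leg L p) = - pQ L i p := by
  have := key_fderivH hL hG hGL hLG hHdef p
    (((Pi.single i 1 : Fin n → ℝ)), (0 : Fin m → Fin k → ℝ))
  rw [pQ, this]
  simp [Pi.single_apply, ite_mul, Finset.sum_ite_eq]



/-- Forward direction of the Lagrangian–Hamiltonian equivalence:
the Legendre image of a solution of the Euler–Lagrange equations on a Lie algebroid
solves the Hamilton equations on Lie algebroids. -/
theorem stmt9 {n m k : ℕ} (L : KPt n m k → ℝ) (hL : ContDiff ℝ (⊤ : ℕ∞) L)
    (ρ : Fin n → Fin m → (Fin n → ℝ) → ℝ) (C : Fin m → Fin m → Fin m → (Fin n → ℝ) → ℝ)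
    (hρ : ∀ i α, ContDiff ℝ (⊤ : ℕ∞) (ρ i α)) (hC : ∀ γ α β, ContDiff ℝ (⊤ : ℕ∞) (C γ α β))
    (hCanti : ∀ γ α β q, C γ α β q = - C γ β α q)
    (G : KPt n m k → KPt n m k) (hG : ContDiff ℝ (⊤ : ℕ∞) G)
    (hGL : Function.LeftInverse G (Leg L)) (hLG : Function.RightInverse G (Leg L))
    (H : KPt n m k → ℝ) (hHdef : ∀ p, H p = EnergyL L (G p))
    (η : (Fin k → ℝ) → KPt n m k) (hη : ContDiff ℝ (⊤ : ℕ∞) η)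
    (ha : ∀ (i : Fin n) (A : Fin k) (t : Fin k → ℝ),
      pT (fun s => (η s).1 i) A t = ∑ α : Fin m, ρ i α (η t).1 * (η t).2 α A)
    (hEL : ∀ (α : Fin m) (t : Fin k → ℝ),
      (∑ A : Fin k, pT (fun s => pY L α A (η s)) A t)
      = (∑ i : Fin n, ρ i α (η t).1 * pQ L i (η t))
        + ∑ Cc : Fin k, ∑ β : Fin m, ∑ γ : Fin m,
            (η t).2 β Cc * C γ β α (η t).1 * pY L γ Cc (η t))
    (ψ : (Fin k → ℝ) → KPt n m k) (hψdef : ∀ t, ψ t = Leg L (η t)) :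
    (∀ (i : Fin n) (A : Fin k) (t : Fin k → ℝ),
      pT (fun s => (ψ s).1 i) A t = ∑ α : Fin m, ρ i α (ψ t).1 * pY H α A (ψ t)) ∧
    (∀ (α : Fin m) (t : Fin k → ℝ),
      (∑ A : Fin k, pT (fun s => (ψ s).2 α A) A t)
      = -((∑ β : Fin m, ∑ δ : Fin m, ∑ B : Fin k,
            C δ α β (ψ t).1 * (ψ t).2 δ B * pY H β B (ψ t))
          + ∑ i : Fin n, ρ i α (ψ t).1 * pQ H i (ψ t))) := by
  have hψ1 : ∀ t, (ψ t).1 = (η t).1 := fun t => by rw [hψdef]; rfl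
  have hψ2 : ∀ t (α : Fin m) (A : Fin k), (ψ t).2 α A = pY L α A (η t) := fun t α A => by
    rw [hψdef]; rfl
  have hpYH : ∀ t (α : Fin m) (A : Fin k), pY H α A (ψ t) = (η t).2 α A := fun t α A => by
    rw [hψdef]; exact pY_H hL hG hGL hLG hHdef _ α A
  have hpQH : ∀ t (i : Fin n), pQ H i (ψ t) = - pQ L i (η t) := fun t i => by
    rw [hψdef]; exact pQ_H hL hG hGL hLG hHdef _ i
  constructor
  · intro i A t
    have hfun : (fun s => (ψ s).1 i) = (fun s => (η s).1 i) := funext fun s => by rw [hψ1]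
    rw [hfun, ha]
    exact Finset.sum_congr rfl fun α _ => by rw [hψ1, hpYH]
  · intro α t
    have hfun : ∀ A : Fin k, (fun s => (ψ s).2 α A) = (fun s => pY L α A (η s)) :=
      fun A => funext fun s => hψ2 s α A
    have hlhs : (∑ A : Fin k, pT (fun s => (ψ s).2 α A) A t)
        = ∑ A : Fin k, pT (fun s => pY L α A (η s)) A t :=
      Finset.sum_congr rfl fun A _ => by rw [hfun]
    rw [hlhs, hEL]
    have hrhs1 : (∑ β : Fin m, ∑ δ : Fin m, ∑ B : Fin k,
          C δ α β (ψ t).1 * (ψ t).2 δ B * pY H β B (ψ t))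
        = - ∑ β : Fin m, ∑ δ : Fin m, ∑ B : Fin k,
            (η t).2 β B * C δ β α (η t).1 * pY L δ B (η t) := by
      rw [← Finset.sum_neg_distrib]
      refine Finset.sum_congr rfl fun β _ => ?_
      rw [← Finset.sum_neg_distrib]
      refine Finset.sum_congr rfl fun δ _ => ?_
      rw [← Finset.sum_neg_distrib]
      refine Finset.sum_congr rfl fun B _ => ?_
      rw [hψ1, hψ2, hpYH, hCanti]
      ring
    have hrhs2 : (∑ i : Fin n, ρ i α (ψ t).1 * pQ H i (ψ t))
        = - ∑ i : Fin n, ρ i α (η t).1 * pQ L i (η t) := by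
      rw [← Finset.sum_neg_distrib]
      refine Finset.sum_congr rfl fun i _ => ?_
      rw [hψ1, hpQH]; ring
    rw [hrhs1, hrhs2]
    have hcomm : (∑ Cc : Fin k, ∑ β : Fin m, ∑ γ : Fin m,
          (η t).2 β Cc * C γ β α (η t).1 * pY L γ Cc (η t))
        = ∑ β : Fin m, ∑ γ : Fin m, ∑ Cc : Fin k,
            (η t).2 β Cc * C γ β α (η t).1 * pY L γ Cc (η t) := by
      rw [Finset.sum_comm]
      exact Finset.sum_congr rfl fun β _ => Finset.sum_comm
    rw [hcomm]
    ring
end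
end

section
/- Let L : ℝ^n × ℝ^{m·k} → ℝ be smooth, let ρ^i_α, C^γ_{αβ} : ℝ^n → ℝ be structure functions, and let Leg(q, y) = (q^i, ∂L/∂y^α_A(q, y)). For (q, y) ∈ ℝ^n × ℝ^{m·k} and (z, w), (z', w') ∈ ℝ^m × ℝ^{m·k}, define the Lagrangian 2-section Ω_L^A|_{(q,y)}((z, w), (z', w')) = (1/2) Σ_{α,β} ( Σ_i ρ^i_β(q) ∂²L/∂q^i∂y^α_A − Σ_i ρ^i_α(q) ∂²L/∂q^i∂y^β_A + Σ_γ C^γ_{αβ}(q) ∂L/∂y^γ_A )(q,y) (z^α z'^β − z^β z'^α) + Σ_{α,β,B} ∂²L/∂y^β_B∂y^α_A(q,y) (z^α w'^β_B − w^β_B z'^α), and, for a momentum point (q, p) with coordinates p^A_δ, the canonical 2-section Ω^A|_{(q,p)}((z, w), (z', w')) = Σ_β (z^β w'^A_β − w^A_β z'^β) + (1/2) Σ_{β,γ,δ} C^δ_{βγ}(q) p^A_δ (z^β z'^γ − z^γ z'^β). For (z, w) set w̃(z, w)^C_γ = Σ_{α,i} z^α ρ^i_α(q) ∂²L/∂q^i∂y^γ_C(q,y)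 + Σ_{β,B} w^β_B ∂²L/∂y^γ_C∂y^β_B(q,y). Then for every (q, y), every A, and all (z, w), (z', w'): (1) Σ_β ( ∂L/∂y^β_A(q,y) ) z^β equals the canonical 1-section Θ^A evaluated at Leg(q,y) on (z, w̃(z,w)), i.e. Θ^A_{Leg(q,y)}(z, w̃) := Σ_β p^A_β z^β with p = Leg(q,y) satisfies Θ^A_{Leg(q,y)}(z, w̃) = Σ_β ∂L/∂y^β_A(q,y) z^β; and (2) Ω^A|_{Leg(q,y)}((z, w̃(z,w)), (z', w̃(z',w'))) = Ω_L^A|_{(q,y)}((z, w), (z', w')). -/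
open scoped BigOperators

noncomputable section

/-- Local expression of the Poincaré–Cartan 2-section `Ω_L^A` evaluated on two elements
`(z, w)`, `(z', w')` of the fibre of the Lagrangian prolongation. -/
noncomputable def OmegaLag {n m k : ℕ} (L : KPt n m k → ℝ)
    (ρ : Fin n → Fin m → (Fin n → ℝ) → ℝ) (C : Fin m → Fin m → Fin m → (Fin n → ℝ) → ℝ)
    (p : KPt n m k) (A : Fin k) (z : Fin m → ℝ) (w : Fin m → Fin k → ℝ)
    (z' : Fin m → ℝ) (w' : Fin m → Fin k → ℝ) : ℝ :=
  (1 / 2) * (∑ α : Fin m, ∑ β : Fin m,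
      ((∑ i : Fin n, ρ i β p.1 * pQ (pY L α A) i p)
        - (∑ i : Fin n, ρ i α p.1 * pQ (pY L β A) i p)
        + ∑ γ : Fin m, C γ α β p.1 * pY L γ A p) * (z α * z' β - z β * z' α))
    + ∑ α : Fin m, ∑ β : Fin m, ∑ B : Fin k,
        pY (pY L α A) β B p * (z α * w' β B - w β B * z' α)

/-- Local expression of the canonical (Liouville) 2-section `Ω^A` at a momentum point `P`
(momenta `p^A_δ` stored as `P.2 δ A`). -/
noncomputable def OmegaHam {n m k : ℕ}
    (C : Fin m → Fin m → Fin m → (Fin n → ℝ) → ℝ) (P : KPt n m k) (A : Fin k)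
    (z : Fin m → ℝ) (w : Fin m → Fin k → ℝ) (z' : Fin m → ℝ) (w' : Fin m → Fin k → ℝ) : ℝ :=
  (∑ β : Fin m, (z β * w' β A - w β A * z' β))
    + (1 / 2) * ∑ β : Fin m, ∑ γ : Fin m, ∑ δ : Fin m,
        C δ β γ P.1 * P.2 δ A * (z β * z' γ - z γ * z' β)

/-- Local expression of the fibre part of the prolonged Legendre map `𝒯^E Leg`. -/
noncomputable def wTil {n m k : ℕ} (L : KPt n m k → ℝ)
    (ρ : Fin n → Fin m → (Fin n → ℝ) → ℝ) (p : KPt n m k)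
    (z : Fin m → ℝ) (w : Fin m → Fin k → ℝ) : Fin m → Fin k → ℝ :=
  fun γ Cc =>
    (∑ α : Fin m, ∑ i : Fin n, z α * ρ i α p.1 * pQ (pY L γ Cc) i p)
      + ∑ β : Fin m, ∑ B : Fin k, w β B * pY (pY L β B) γ Cc p


lemma fderiv_fderiv_apply' {E : Type*} [NormedAddCommGroup E] [NormedSpace ℝ E]
    (L : E → ℝ) (hL : ContDiff ℝ (⊤ : ℕ∞) L) (p : E) (v u : E) :
    fderiv ℝ (fun x => fderiv ℝ L x v) p u = fderiv ℝ (fderiv ℝ L) p u v := by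
  have hd : DifferentiableAt ℝ (fderiv ℝ L) p := by
    have : ContDiff ℝ (⊤ : ℕ∞) (fderiv ℝ L) := hL.fderiv_right (by simp)
    exact (this.differentiable (by simp)).differentiableAt
  rw [fderiv_clm_apply hd (differentiableAt_const v)]
  simp

lemma pY_pY_symm {n m k : ℕ} (L : KPt n m k → ℝ) (hL : ContDiff ℝ (⊤ : ℕ∞) L) (p : KPt n m k)
    (α : Fin m) (A : Fin k) (β : Fin m) (B : Fin k) :
    pY (pY L α A) β B p = pY (pY L β B) α A p := by
  have hsym : IsSymmSndFDerivAt ℝ L p := hL.contDiffAt.isSymmSndFDerivAt (by rw [minSmoothness_of_isRCLikeNormedField]; exact WithTop.coe_le_coe.mpr (le_top : (2 : ℕ∞) ≤ ⊤))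
  have e1 : pY L α A = fun x => fderiv ℝ L x ((0 : Fin n → ℝ), (Pi.single α (Pi.single A 1) : Fin m → Fin k → ℝ)) := rfl
  have e2 : pY L β B = fun x => fderiv ℝ L x ((0 : Fin n → ℝ), (Pi.single β (Pi.single B 1) : Fin m → Fin k → ℝ)) := rfl
  simp only [pY, e1, e2]
  rw [fderiv_fderiv_apply' L hL, fderiv_fderiv_apply' L hL]
  exact hsym _ _

lemma sum_swap_neg {m : ℕ} (g : Fin m → Fin m → ℝ) (z z' : Fin m → ℝ) :
    (∑ α : Fin m, ∑ β : Fin m, g α β * (z α * z' β - z β * z' α))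
      = -∑ α : Fin m, ∑ β : Fin m, g β α * (z α * z' β - z β * z' α) := by
  rw [Finset.sum_comm, ← Finset.sum_neg_distrib]
  refine Finset.sum_congr rfl fun β _ => ?_
  rw [← Finset.sum_neg_distrib]
  exact Finset.sum_congr rfl fun α _ => by ring

lemma half_anti {m : ℕ} (g : Fin m → Fin m → ℝ) (z z' : Fin m → ℝ) :
    (1/2 : ℝ) * (∑ α : Fin m, ∑ β : Fin m, (g β α - g α β) * (z α * z' β - z β * z' α))
      = ∑ α : Fin m, ∑ β : Fin m, g β α * (z α * z' β - z β * z' α) := by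
  have h1 : (∑ α : Fin m, ∑ β : Fin m, (g β α - g α β) * (z α * z' β - z β * z' α))
      = (∑ α : Fin m, ∑ β : Fin m, g β α * (z α * z' β - z β * z' α))
        - ∑ α : Fin m, ∑ β : Fin m, g α β * (z α * z' β - z β * z' α) := by
    rw [← Finset.sum_sub_distrib]
    refine Finset.sum_congr rfl fun α _ => ?_
    rw [← Finset.sum_sub_distrib]
    exact Finset.sum_congr rfl fun β _ => by ring
  rw [h1, sum_swap_neg g z z']
  ring

lemma alg {n m k : ℕ} (A : Fin k) (r : Fin n → Fin m → ℝ) (c : Fin m → Fin m → Fin m → ℝ)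
    (D : Fin m → Fin n → ℝ) (H : Fin m → Fin k → Fin m → Fin k → ℝ)
    (hH : ∀ a b x y, H a b x y = H x y a b) (P : Fin m → ℝ)
    (z : Fin m → ℝ) (w : Fin m → Fin k → ℝ) (z' : Fin m → ℝ) (w' : Fin m → Fin k → ℝ) :
    (∑ β : Fin m,
        (z β * ((∑ α : Fin m, ∑ i : Fin n, z' α * r i α * D β i)
            + ∑ δ : Fin m, ∑ B : Fin k, w' δ B * H δ B β A)
          - ((∑ α : Fin m, ∑ i : Fin n, z α * r i α * D β i)
            + ∑ δ : Fin m, ∑ B : Fin k, w δ B * H δ B β A) * z' β))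
      + (1/2 : ℝ) * ∑ β : Fin m, ∑ γ : Fin m, ∑ δ : Fin m,
          c δ β γ * P δ * (z β * z' γ - z γ * z' β)
    = (1/2 : ℝ) * (∑ α : Fin m, ∑ β : Fin m,
          ((∑ i : Fin n, r i β * D α i) - (∑ i : Fin n, r i α * D β i)
            + ∑ γ : Fin m, c γ α β * P γ) * (z α * z' β - z β * z' α))
      + ∑ α : Fin m, ∑ β : Fin m, ∑ B : Fin k,
          H α A β B * (z α * w' β B - w β B * z' α) := by
  -- split the RHS half-sum
  have hr : (1/2 : ℝ) * (∑ α : Fin m, ∑ β : Fin m,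
          ((∑ i : Fin n, r i β * D α i) - (∑ i : Fin n, r i α * D β i)
            + ∑ γ : Fin m, c γ α β * P γ) * (z α * z' β - z β * z' α))
      = (1/2 : ℝ) * (∑ α : Fin m, ∑ β : Fin m,
          ((∑ i : Fin n, r i β * D α i) - (∑ i : Fin n, r i α * D β i))
            * (z α * z' β - z β * z' α))
        + (1/2 : ℝ) * (∑ α : Fin m, ∑ β : Fin m,
          (∑ γ : Fin m, c γ α β * P γ) * (z α * z' β - z β * z' α)) := by
    rw [← mul_add, ← Finset.sum_add_distrib]
    congr 1
    refine Finset.sum_congr rfl fun α _ => ?_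
    rw [← Finset.sum_add_distrib]
    exact Finset.sum_congr rfl fun β _ => by ring
  rw [hr, half_anti (fun α β => ∑ i : Fin n, r i α * D β i) z z']
  -- split the LHS first sum
  have hl : (∑ β : Fin m,
        (z β * ((∑ α : Fin m, ∑ i : Fin n, z' α * r i α * D β i)
            + ∑ δ : Fin m, ∑ B : Fin k, w' δ B * H δ B β A)
          - ((∑ α : Fin m, ∑ i : Fin n, z α * r i α * D β i)
            + ∑ δ : Fin m, ∑ B : Fin k, w δ B * H δ B β A) * z' β))
      = (∑ β : Fin m, (z β * (∑ α : Fin m, ∑ i : Fin n, z' α * r i α * D β i)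
            - (∑ α : Fin m, ∑ i : Fin n, z α * r i α * D β i) * z' β))
        + ∑ β : Fin m, (z β * (∑ δ : Fin m, ∑ B : Fin k, w' δ B * H δ B β A)
            - (∑ δ : Fin m, ∑ B : Fin k, w δ B * H δ B β A) * z' β) := by
    rw [← Finset.sum_add_distrib]
    exact Finset.sum_congr rfl fun β _ => by ring
  rw [hl]
  have h1 : (∑ β : Fin m, (z β * (∑ α : Fin m, ∑ i : Fin n, z' α * r i α * D β i)
            - (∑ α : Fin m, ∑ i : Fin n, z α * r i α * D β i) * z' β))
      = ∑ α : Fin m, ∑ β : Fin m,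
          (∑ i : Fin n, r i β * D α i) * (z α * z' β - z β * z' α) := by
    refine Finset.sum_congr rfl fun β _ => ?_
    rw [Finset.mul_sum, Finset.sum_mul, ← Finset.sum_sub_distrib]
    refine Finset.sum_congr rfl fun α _ => ?_
    rw [Finset.mul_sum, Finset.sum_mul, Finset.sum_mul, ← Finset.sum_sub_distrib]
    exact Finset.sum_congr rfl fun i _ => by ring
  have h2 : (∑ β : Fin m, (z β * (∑ δ : Fin m, ∑ B : Fin k, w' δ B * H δ B β A)
            - (∑ δ : Fin m, ∑ B : Fin k, w δ B * H δ B β A) * z' β))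
      = ∑ α : Fin m, ∑ β : Fin m, ∑ B : Fin k,
          H α A β B * (z α * w' β B - w β B * z' α) := by
    refine Finset.sum_congr rfl fun β _ => ?_
    rw [Finset.mul_sum, Finset.sum_mul, ← Finset.sum_sub_distrib]
    refine Finset.sum_congr rfl fun α _ => ?_
    rw [Finset.mul_sum, Finset.sum_mul, ← Finset.sum_sub_distrib]
    refine Finset.sum_congr rfl fun B _ => ?_
    rw [hH α B β A]
    ring
  rw [h1, h2]
  have h3 : (1/2 : ℝ) * ∑ β : Fin m, ∑ γ : Fin m, ∑ δ : Fin m,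
          c δ β γ * P δ * (z β * z' γ - z γ * z' β)
      = (1/2 : ℝ) * (∑ α : Fin m, ∑ β : Fin m,
          (∑ γ : Fin m, c γ α β * P γ) * (z α * z' β - z β * z' α)) := by
    congr 1
    refine Finset.sum_congr rfl fun α _ => ?_
    refine Finset.sum_congr rfl fun β _ => ?_
    rw [Finset.sum_mul]
  rw [h3]
  ring

/-- The prolonged Legendre map pulls the Liouville sections `Θ^A`, `Ω^A`
back to the Poincaré–Cartan sections `Θ_L^A`, `Ω_L^A`, in local coordinates. -/
theorem stmt11 {n m k : ℕ} (L : KPt n m k → ℝ) (hL : ContDiff ℝ (⊤ : ℕ∞) L)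
    (ρ : Fin n → Fin m → (Fin n → ℝ) → ℝ) (C : Fin m → Fin m → Fin m → (Fin n → ℝ) → ℝ)
    (hρ : ∀ i α, ContDiff ℝ (⊤ : ℕ∞) (ρ i α)) (hC : ∀ γ α β, ContDiff ℝ (⊤ : ℕ∞) (C γ α β))
    (hCanti : ∀ γ α β q, C γ α β q = - C γ β α q) :
    ∀ (p : KPt n m k) (A : Fin k) (z : Fin m → ℝ) (w : Fin m → Fin k → ℝ)
      (z' : Fin m → ℝ) (w' : Fin m → Fin k → ℝ),
      ((∑ β : Fin m, (Leg L p).2 β A * z β) = ∑ β : Fin m, pY L β A p * z β) ∧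
      OmegaHam C (Leg L p) A z (wTil L ρ p z w) z' (wTil L ρ p z' w')
        = OmegaLag L ρ C p A z w z' w' := by
  intro p A z w z' w'
  refine ⟨by simp [Leg], ?_⟩
  simp only [OmegaHam, OmegaLag, wTil, Leg]
  exact alg A (fun i α => ρ i α p.1) (fun δ β γ => C δ β γ p.1)
    (fun β i => pQ (pY L β A) i p) (fun a b x y => pY (pY L a b) x y p)
    (fun a b x y => pY_pY_symm L hL p a b x y) (fun δ => pY L δ A p) z w z' w'
end
end

section
/- (Poisson sigma model.) Let Λ^{ij} : ℝ^n → ℝ be smooth with Λ^{ij} = −Λ^{ji} and satisfying the Poisson (Jacobi) identity Σ_l ( Λ^{lk} ∂Λ^{ij}/∂q^l + Λ^{li} ∂Λ^{jk}/∂q^l + Λ^{lj} ∂Λ^{ki}/∂q^l ) = 0 for all i, j, k. Take k = 2, m = n, structure functions of the cotangent Lie algebroid ρ^i_α = Λ^{αi} and C^γ_{αβ} = ∂Λ^{αβ}/∂q^γ, and the Lagrangian L(q, p^1, p^2) = −(1/2) Σ_{i,j} Λ^{ij}(q) p^1_i p^2_j on ℝ^n × ℝ^{2n}. Then a smooth map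 φ(t) = (q^i(t), p^1_i(t), p^2_i(t)) : ℝ² → ℝ^n × ℝ^{2n} satisfies the Euler–Lagrange equations for field theories on Lie algebroids (the system: Σ_A ∂/∂t^A(∂L/∂y^α_A ∘ φ) = Σ_i ρ^i_α(q) ∂L/∂q^i(φ) + Σ φ^β_C C^γ_{βα}(q) ∂L/∂y^γ_C(φ); ∂q^i/∂t^A = Σ_α ρ^i_α(q) φ^α_A; and the morphism condition ∂φ^α_A/∂t^B − ∂φ^α_B/∂t^A + Σ C^α_{βγ}(q) φ^β_B φ^γ_A = 0, with φ^α_A = p^A_α) if and only if it satisfies the Poisson sigma model field equations: ∂q^i/∂t^A + Σ_j Λ^{ij}(q) p^A_j = 0 for A = 1, 2, and ∂p^2_i/∂t^1 − ∂p^1_i/∂t^2 + Σ_{k,l} ∂Λ^{kl}/∂q^i(q) p^1_k p^2_l = 0, for all i. -/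
open scoped BigOperators

noncomputable section

namespace PSMaux
variable {n : ℕ}

/-- projection CLM: p ↦ p.1 i -/
def e1 (i : Fin n) : KPt n n 2 →L[ℝ] ℝ :=
  (ContinuousLinearMap.proj i).comp (ContinuousLinearMap.fst ℝ (Fin n → ℝ) (Fin n → Fin 2 → ℝ))

/-- projection CLM: p ↦ p.2 α A -/
def e2 (α : Fin n) (A : Fin 2) : KPt n n 2 →L[ℝ] ℝ :=
  (((ContinuousLinearMap.proj A : (Fin 2 → ℝ) →L[ℝ] ℝ).comp
      (ContinuousLinearMap.proj α : (Fin n → Fin 2 → ℝ) →L[ℝ] (Fin 2 → ℝ)))).comp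
    (ContinuousLinearMap.snd ℝ (Fin n → ℝ) (Fin n → Fin 2 → ℝ))

@[simp] lemma e1_apply (i : Fin n) (w : KPt n n 2) : e1 i w = w.1 i := rfl
@[simp] lemma e2_apply (α : Fin n) (A : Fin 2) (w : KPt n n 2) : e2 α A w = w.2 α A := rfl

lemma basis_decomp (w : KPt n n 2) :
    w = (∑ i : Fin n, w.1 i • (((Pi.single i 1 : Fin n → ℝ), 0) : KPt n n 2))
      + ∑ α : Fin n, ∑ A : Fin 2,
          w.2 α A • (((0 : Fin n → ℝ), Pi.single α (Pi.single A 1)) : KPt n n 2) := by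
  refine Prod.ext ?_ ?_
  · simp only [Prod.fst_add, Prod.fst_sum, Prod.smul_fst, Prod.snd_add]
    funext j
    simp [Finset.sum_apply, Pi.single_apply]
  · simp only [Prod.snd_add, Prod.snd_sum, Prod.smul_snd]
    funext α B
    simp only [Finset.sum_apply, Pi.add_apply, Pi.smul_apply, Pi.single_apply, Pi.zero_apply,
      smul_eq_mul]
    fin_cases B <;> simp [ite_apply, Pi.single_apply, Finset.sum_ite_eq']

lemma fderiv_apply_eq {f : KPt n n 2 → ℝ} {p : KPt n n 2} (w : KPt n n 2) :
    fderiv ℝ f p w = (∑ i : Fin n, w.1 i * pQ f i p)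
      + ∑ α : Fin n, ∑ A : Fin 2, w.2 α A * pY f α A p := by
  conv_lhs => rw [basis_decomp w]
  rw [map_add, map_sum]
  congr 1
  · exact Finset.sum_congr rfl fun i _ => by rw [map_smul]; rfl
  · rw [map_sum]
    refine Finset.sum_congr rfl fun α _ => ?_
    rw [map_sum]
    exact Finset.sum_congr rfl fun A _ => by rw [map_smul]; rfl

section chain
variable {φ : (Fin 2 → ℝ) → KPt n n 2}

lemma pT_comp1 (hφ : ContDiff ℝ (⊤ : ℕ∞) φ) (i : Fin n) (A : Fin 2) (t : Fin 2 → ℝ) :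
    pT (fun s => (φ s).1 i) A t = (fderiv ℝ φ t (Pi.single A 1)).1 i := by
  have h : HasFDerivAt (fun s => (φ s).1 i) ((e1 i).comp (fderiv ℝ φ t)) t :=
    (e1 i).hasFDerivAt.comp t (hφ.differentiable (by simp) t).hasFDerivAt
  rw [pT, h.fderiv]; rfl

lemma pT_comp2 (hφ : ContDiff ℝ (⊤ : ℕ∞) φ) (α : Fin n) (B : Fin 2) (A : Fin 2) (t : Fin 2 → ℝ) :
    pT (fun s => (φ s).2 α B) A t = (fderiv ℝ φ t (Pi.single A 1)).2 α B := by
  have h : HasFDerivAt (fun s => (φ s).2 α B) ((e2 α B).comp (fderiv ℝ φ t)) t :=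
    (e2 α B).hasFDerivAt.comp t (hφ.differentiable (by simp) t).hasFDerivAt
  rw [pT, h.fderiv]; rfl

/-- master chain rule -/
lemma pT_chain (hφ : ContDiff ℝ (⊤ : ℕ∞) φ) (G : KPt n n 2 → ℝ) (A : Fin 2) (t : Fin 2 → ℝ)
    (hG : DifferentiableAt ℝ G (φ t)) :
    pT (fun s => G (φ s)) A t
      = (∑ i : Fin n, pQ G i (φ t) * pT (fun s => (φ s).1 i) A t)
        + ∑ α : Fin n, ∑ B : Fin 2, pY G α B (φ t) * pT (fun s => (φ s).2 α B) A t := by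
  have hc : HasFDerivAt (fun s => G (φ s)) ((fderiv ℝ G (φ t)).comp (fderiv ℝ φ t)) t :=
    hG.hasFDerivAt.comp t (hφ.differentiable (by simp) t).hasFDerivAt
  have h1 : pT (fun s => G (φ s)) A t = fderiv ℝ G (φ t) (fderiv ℝ φ t (Pi.single A 1)) := by
    rw [pT, hc.fderiv]; rfl
  rw [h1, fderiv_apply_eq]
  congr 1
  · exact Finset.sum_congr rfl fun i _ => by rw [pT_comp1 hφ, mul_comm]
  · exact Finset.sum_congr rfl fun α _ => Finset.sum_congr rfl fun B _ => by
      rw [pT_comp2 hφ, mul_comm]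

end chain

section terms
variable {f : (Fin n → ℝ) → ℝ}

def fstCLM : KPt n n 2 →L[ℝ] (Fin n → ℝ) := ContinuousLinearMap.fst ℝ _ _

lemma hasF_fst (hf : Differentiable ℝ f) (p : KPt n n 2) :
    HasFDerivAt (fun p : KPt n n 2 => f p.1) ((fderiv ℝ f p.1).comp fstCLM) p :=
  (hf p.1).hasFDerivAt.comp p hasFDerivAt_fst

lemma hasF_term1 (hf : Differentiable ℝ f) (k : Fin n) (B : Fin 2) (p : KPt n n 2) :
    HasFDerivAt (fun p : KPt n n 2 => f p.1 * p.2 k B)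
      (f p.1 • e2 k B + p.2 k B • ((fderiv ℝ f p.1).comp fstCLM)) p :=
  (hasF_fst hf p).mul (e2 k B).hasFDerivAt

lemma hasF_term2 (hf : Differentiable ℝ f) (k l : Fin n) (p : KPt n n 2) :
    HasFDerivAt (fun p : KPt n n 2 => f p.1 * p.2 k 0 * p.2 l 1)
      ((f p.1 * p.2 k 0) • e2 l 1
        + p.2 l 1 • (f p.1 • e2 k 0 + p.2 k 0 • ((fderiv ℝ f p.1).comp fstCLM))) p :=
  (hasF_term1 hf k 0 p).mul (e2 l 1).hasFDerivAt

lemma diff_term1 (hf : Differentiable ℝ f) (k : Fin n) (B : Fin 2) (p : KPt n n 2) :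
    DifferentiableAt ℝ (fun p : KPt n n 2 => f p.1 * p.2 k B) p :=
  (hasF_term1 hf k B p).differentiableAt

lemma diff_term2 (hf : Differentiable ℝ f) (k l : Fin n) (p : KPt n n 2) :
    DifferentiableAt ℝ (fun p : KPt n n 2 => f p.1 * p.2 k 0 * p.2 l 1) p :=
  (hasF_term2 hf k l p).differentiableAt

lemma pQ_term1 (hf : Differentiable ℝ f) (k : Fin n) (B : Fin 2) (i : Fin n) (p : KPt n n 2) :
    pQ (fun p : KPt n n 2 => f p.1 * p.2 k B) i p = pQn f i p.1 * p.2 k B := by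
  rw [pQ, (hasF_term1 hf k B p).fderiv]
  simp [pQn, fstCLM, mul_comm]

lemma pY_term1 (hf : Differentiable ℝ f) (k : Fin n) (B : Fin 2) (α : Fin n) (A : Fin 2)
    (p : KPt n n 2) :
    pY (fun p : KPt n n 2 => f p.1 * p.2 k B) α A p
      = if k = α ∧ B = A then f p.1 else 0 := by
  rw [pY, (hasF_term1 hf k B p).fderiv]
  simp [fstCLM, Pi.single_apply, ite_and]
  split_ifs <;> simp_all [Pi.single_apply]

lemma pQ_term2 (hf : Differentiable ℝ f) (k l : Fin n) (i : Fin n) (p : KPt n n 2) :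
    pQ (fun p : KPt n n 2 => f p.1 * p.2 k 0 * p.2 l 1) i p
      = pQn f i p.1 * p.2 k 0 * p.2 l 1 := by
  rw [pQ, (hasF_term2 hf k l p).fderiv]
  simp [pQn, fstCLM]
  ring

lemma pY_term2 (hf : Differentiable ℝ f) (k l : Fin n) (α : Fin n) (A : Fin 2) (p : KPt n n 2) :
    pY (fun p : KPt n n 2 => f p.1 * p.2 k 0 * p.2 l 1) α A p
      = (if k = α ∧ (0 : Fin 2) = A then f p.1 * p.2 l 1 else 0)
        + (if l = α ∧ (1 : Fin 2) = A then f p.1 * p.2 k 0 else 0) := by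
  rw [pY, (hasF_term2 hf k l p).fderiv]
  simp [fstCLM, Pi.single_apply, ite_and]
  split_ifs <;> simp_all [Pi.single_apply] <;> ring

end terms

section sums
variable {ι : Type*} [Fintype ι]

lemma pQ_sum {g : ι → KPt n n 2 → ℝ} {p : KPt n n 2}
    (hg : ∀ j, DifferentiableAt ℝ (g j) p) (i : Fin n) :
    pQ (fun p => ∑ j, g j p) i p = ∑ j, pQ (g j) i p := by
  rw [pQ, fderiv_fun_sum fun j _ => hg j]
  simp [pQ]

lemma pY_sum {g : ι → KPt n n 2 → ℝ} {p : KPt n n 2}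
    (hg : ∀ j, DifferentiableAt ℝ (g j) p) (α : Fin n) (A : Fin 2) :
    pY (fun p => ∑ j, g j p) α A p = ∑ j, pY (g j) α A p := by
  rw [pY, fderiv_fun_sum fun j _ => hg j]
  simp [pY]

end sums

lemma pQn_const_mul {f : (Fin n → ℝ) → ℝ} (hf : Differentiable ℝ f) (c : ℝ)
    (i : Fin n) (q : Fin n → ℝ) :
    pQn (fun x => c * f x) i q = c * pQn f i q := by
  rw [pQn, fderiv_const_mul (hf q) c]
  simp [pQn]

lemma pQn_neg_anti {g h : (Fin n → ℝ) → ℝ} (hgh : ∀ q, g q = -h q) (i : Fin n) (q : Fin n → ℝ) :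
    pQn g i q = - pQn h i q := by
  have : g = fun q => -h q := funext hgh
  rw [pQn, this, fderiv_fun_neg]
  simp [pQn]

section Lform
variable (Λ : Fin n → Fin n → (Fin n → ℝ) → ℝ)

/-- the function agreeing with `pY L α 0`. -/
def G0 (α : Fin n) : KPt n n 2 → ℝ :=
  fun p => ∑ j : Fin n, (-(1 / 2) * Λ α j p.1) * p.2 j 1

/-- the function agreeing with `pY L α 1`. -/
def G1 (α : Fin n) : KPt n n 2 → ℝ :=
  fun p => ∑ i : Fin n, (-(1 / 2) * Λ i α p.1) * p.2 i 0

lemma fij_diff (hΛ : ∀ i j, Differentiable ℝ (Λ i j)) (i j : Fin n) : Differentiable ℝ (fun x => -(1 / 2 : ℝ) * Λ i j x) :=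
  (hΛ i j).const_mul _

lemma diff_G0 (hΛ : ∀ i j, Differentiable ℝ (Λ i j)) (α : Fin n) (p : KPt n n 2) : DifferentiableAt ℝ (G0 Λ α) p :=
  DifferentiableAt.fun_sum fun j _ => diff_term1 (fij_diff Λ hΛ α j) j 1 p

lemma diff_G1 (hΛ : ∀ i j, Differentiable ℝ (Λ i j)) (α : Fin n) (p : KPt n n 2) : DifferentiableAt ℝ (G1 Λ α) p :=
  DifferentiableAt.fun_sum fun j _ => diff_term1 (fij_diff Λ hΛ j α) j 0 p

lemma pQ_G0 (hΛ : ∀ i j, Differentiable ℝ (Λ i j)) (α : Fin n) (i : Fin n) (p : KPt n n 2) :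
    pQ (G0 Λ α) i p = ∑ j : Fin n, (-(1 / 2) * pQn (Λ α j) i p.1) * p.2 j 1 := by
  unfold G0
  rw [pQ_sum fun j => diff_term1 (fij_diff Λ hΛ α j) j 1 p]
  exact Finset.sum_congr rfl fun j _ => by
    rw [pQ_term1 (fij_diff Λ hΛ α j), pQn_const_mul (hΛ α j)]

lemma pQ_G1 (hΛ : ∀ i j, Differentiable ℝ (Λ i j)) (α : Fin n) (i : Fin n) (p : KPt n n 2) :
    pQ (G1 Λ α) i p = ∑ j : Fin n, (-(1 / 2) * pQn (Λ j α) i p.1) * p.2 j 0 := by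
  unfold G1
  rw [pQ_sum fun j => diff_term1 (fij_diff Λ hΛ j α) j 0 p]
  exact Finset.sum_congr rfl fun j _ => by
    rw [pQ_term1 (fij_diff Λ hΛ j α), pQn_const_mul (hΛ j α)]

lemma pY_G0 (hΛ : ∀ i j, Differentiable ℝ (Λ i j)) (α β : Fin n) (B : Fin 2) (p : KPt n n 2) :
    pY (G0 Λ α) β B p = if (1 : Fin 2) = B then -(1 / 2) * Λ α β p.1 else 0 := by
  unfold G0
  rw [pY_sum fun j => diff_term1 (fij_diff Λ hΛ α j) j 1 p]
  rw [Finset.sum_congr rfl fun j (_ : j ∈ Finset.univ) =>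
    pY_term1 (fij_diff Λ hΛ α j) j 1 β B p]
  simp [ite_and]

lemma pY_G1 (hΛ : ∀ i j, Differentiable ℝ (Λ i j)) (α β : Fin n) (B : Fin 2) (p : KPt n n 2) :
    pY (G1 Λ α) β B p = if (0 : Fin 2) = B then -(1 / 2) * Λ β α p.1 else 0 := by
  unfold G1
  rw [pY_sum fun j => diff_term1 (fij_diff Λ hΛ j α) j 0 p]
  rw [Finset.sum_congr rfl fun j (_ : j ∈ Finset.univ) =>
    pY_term1 (fij_diff Λ hΛ j α) j 0 β B p]
  simp [ite_and]

variable (L : KPt n n 2 → ℝ)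

lemma L_eq (hLdef : ∀ p : KPt n n 2,
    L p = -(1 / 2) * ∑ i : Fin n, ∑ j : Fin n, Λ i j p.1 * p.2 i 0 * p.2 j 1) : L = fun p => ∑ i : Fin n, ∑ j : Fin n,
    (-(1 / 2 : ℝ) * Λ i j p.1) * p.2 i 0 * p.2 j 1 := by
  funext p
  rw [hLdef p, Finset.mul_sum]
  refine Finset.sum_congr rfl fun i _ => ?_
  rw [Finset.mul_sum]
  exact Finset.sum_congr rfl fun j _ => by ring

lemma pY_L0 (hΛ : ∀ i j, Differentiable ℝ (Λ i j))
    (hLdef : ∀ p : KPt n n 2,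
      L p = -(1 / 2) * ∑ i : Fin n, ∑ j : Fin n, Λ i j p.1 * p.2 i 0 * p.2 j 1) (α : Fin n) (p : KPt n n 2) :
    pY L α 0 p = G0 Λ α p := by
  rw [L_eq Λ L hLdef]
  unfold G0
  rw [pY_sum fun i => DifferentiableAt.fun_sum fun j _ => diff_term2 (fij_diff Λ hΛ i j) i j p]
  rw [Finset.sum_congr rfl fun i (_ : i ∈ Finset.univ) =>
    pY_sum (fun j => diff_term2 (fij_diff Λ hΛ i j) i j p) α 0]
  rw [Finset.sum_congr rfl fun i (_ : i ∈ Finset.univ) =>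
    Finset.sum_congr rfl fun j (_ : j ∈ Finset.univ) =>
      pY_term2 (fij_diff Λ hΛ i j) i j α 0 p]
  simp [Finset.sum_add_distrib, Finset.sum_ite_eq']

lemma pY_L1 (hΛ : ∀ i j, Differentiable ℝ (Λ i j))
    (hLdef : ∀ p : KPt n n 2,
      L p = -(1 / 2) * ∑ i : Fin n, ∑ j : Fin n, Λ i j p.1 * p.2 i 0 * p.2 j 1) (α : Fin n) (p : KPt n n 2) :
    pY L α 1 p = G1 Λ α p := by
  rw [L_eq Λ L hLdef]
  unfold G1
  rw [pY_sum fun i => DifferentiableAt.fun_sum fun j _ => diff_term2 (fij_diff Λ hΛ i j) i j p]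
  rw [Finset.sum_congr rfl fun i (_ : i ∈ Finset.univ) =>
    pY_sum (fun j => diff_term2 (fij_diff Λ hΛ i j) i j p) α 1]
  rw [Finset.sum_congr rfl fun i (_ : i ∈ Finset.univ) =>
    Finset.sum_congr rfl fun j (_ : j ∈ Finset.univ) =>
      pY_term2 (fij_diff Λ hΛ i j) i j α 1 p]
  simp [Finset.sum_add_distrib, Finset.sum_ite_eq']

lemma pQ_L (hΛ : ∀ i j, Differentiable ℝ (Λ i j))
    (hLdef : ∀ p : KPt n n 2,
      L p = -(1 / 2) * ∑ i : Fin n, ∑ j : Fin n, Λ i j p.1 * p.2 i 0 * p.2 j 1) (i : Fin n) (p : KPt n n 2) :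
    pQ L i p = ∑ k : Fin n, ∑ l : Fin n,
      (-(1 / 2) * pQn (Λ k l) i p.1) * p.2 k 0 * p.2 l 1 := by
  rw [L_eq Λ L hLdef]
  rw [pQ_sum fun k => DifferentiableAt.fun_sum fun l _ => diff_term2 (fij_diff Λ hΛ k l) k l p]
  refine Finset.sum_congr rfl fun k _ => ?_
  rw [pQ_sum (fun l => diff_term2 (fij_diff Λ hΛ k l) k l p) i]
  exact Finset.sum_congr rfl fun l _ => by
    rw [pQ_term2 (fij_diff Λ hΛ k l), pQn_const_mul (hΛ k l)]

end Lform

end PSMaux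

namespace PSMaux

lemma sum_antisym {n : ℕ} {d : Fin n → Fin n → ℝ} (hd : ∀ a b, d a b = - d b a)
    (x : Fin n → ℝ) :
    ∑ β : Fin n, ∑ γ : Fin n, d β γ * x β * x γ = 0 := by
  have h : (∑ β : Fin n, ∑ γ : Fin n, d β γ * x β * x γ)
      = ∑ β : Fin n, ∑ γ : Fin n, -(d β γ * x β * x γ) := by
    conv_lhs => rw [Finset.sum_comm]
    refine Finset.sum_congr rfl fun β _ => Finset.sum_congr rfl fun γ _ => ?_
    rw [hd γ β]; ring
  simp only [Finset.sum_neg_distrib] at h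
  linarith

lemma sum3_perm {n : ℕ} (F : Fin n → Fin n → Fin n → ℝ) :
    ∑ x : Fin n, ∑ y : Fin n, ∑ z : Fin n, F x y z
      = ∑ z : Fin n, ∑ y : Fin n, ∑ x : Fin n, F x y z := by
  calc ∑ x : Fin n, ∑ y : Fin n, ∑ z : Fin n, F x y z
      = ∑ y : Fin n, ∑ x : Fin n, ∑ z : Fin n, F x y z := Finset.sum_comm
    _ = ∑ y : Fin n, ∑ z : Fin n, ∑ x : Fin n, F x y z :=
        Finset.sum_congr rfl fun y _ => Finset.sum_comm
    _ = ∑ z : Fin n, ∑ y : Fin n, ∑ x : Fin n, F x y z := Finset.sum_comm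

lemma sum3_rot {n : ℕ} (F : Fin n → Fin n → Fin n → ℝ) :
    ∑ x : Fin n, ∑ y : Fin n, ∑ z : Fin n, F x y z
      = ∑ y : Fin n, ∑ z : Fin n, ∑ x : Fin n, F x y z := by
  rw [sum3_perm]
  exact Finset.sum_comm

lemma sum3_inner {n : ℕ} (F : Fin n → Fin n → Fin n → ℝ) :
    ∑ x : Fin n, ∑ y : Fin n, ∑ z : Fin n, F x y z
      = ∑ x : Fin n, ∑ z : Fin n, ∑ y : Fin n, F x y z :=
  Finset.sum_congr rfl fun _ _ => Finset.sum_comm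

lemma core {n : ℕ} (lam : Fin n → Fin n → ℝ) (d : Fin n → Fin n → Fin n → ℝ)
    (u v P Q : Fin n → ℝ) (α : Fin n)
    (hla : ∀ i j, lam i j = - lam j i)
    (hda : ∀ i j l, d i j l = - d j i l)
    (hJ : ∀ i j kk, ∑ l : Fin n,
      (lam l kk * d i j l + lam l i * d j kk l + lam l j * d kk i l) = 0)
    (hPQ : ∀ x, P x - Q x + ∑ k : Fin n, ∑ l : Fin n, d k l x * u k * v l = 0) :
    ∑ x : Fin n, (∑ y : Fin n, 1 / 2 * d α y x * v y) * ∑ j : Fin n, lam x j * u j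
      + -∑ x : Fin n, 1 / 2 * lam α x * P x
      + (∑ x : Fin n, (∑ y : Fin n, 1 / 2 * d y α x * u y) * ∑ j : Fin n, lam x j * v j
        + -∑ x : Fin n, 1 / 2 * lam x α * Q x)
    = -∑ x : Fin n, lam α x * ∑ k : Fin n, ∑ l : Fin n, 1 / 2 * d k l x * u k * v l
      + (-∑ x : Fin n, ∑ y : Fin n, u x * d x α y * ∑ j : Fin n, 1 / 2 * lam y j * v j
        + -∑ x : Fin n, ∑ y : Fin n, v x * d x α y * ∑ j : Fin n, 1 / 2 * lam j y * u j) := by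
  have h1 : ∑ x : Fin n, (∑ y : Fin n, 1 / 2 * d α y x * v y) * ∑ j : Fin n, lam x j * u j
      = ∑ a : Fin n, ∑ b : Fin n, ∑ i : Fin n,
          u a * v b * (1 / 2 * d α b i * lam i a) := by
    simp only [Finset.sum_mul, Finset.mul_sum]
    rw [sum3_rot]
    exact Finset.sum_congr rfl fun a _ => Finset.sum_congr rfl fun b _ =>
      Finset.sum_congr rfl fun i _ => by ring
  have h3 : ∑ x : Fin n, (∑ y : Fin n, 1 / 2 * d y α x * u y) * ∑ j : Fin n, lam x j * v j
      = ∑ a : Fin n, ∑ b : Fin n, ∑ i : Fin n,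
          u a * v b * (1 / 2 * d a α i * lam i b) := by
    simp only [Finset.sum_mul, Finset.mul_sum]
    rw [sum3_perm]
    exact Finset.sum_congr rfl fun a _ => Finset.sum_congr rfl fun b _ =>
      Finset.sum_congr rfl fun i _ => by ring
  have h24 : -∑ x : Fin n, 1 / 2 * lam α x * P x + -∑ x : Fin n, 1 / 2 * lam x α * Q x
      = ∑ a : Fin n, ∑ b : Fin n, ∑ i : Fin n,
          u a * v b * (1 / 2 * lam α i * d a b i) := by
    have key : ∀ x, -(1 / 2 * lam α x * P x) + -(1 / 2 * lam x α * Q x)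
        = 1 / 2 * lam α x * ∑ k : Fin n, ∑ l : Fin n, d k l x * u k * v l := by
      intro x
      linear_combination (-(1 / 2) * lam α x) * hPQ x + (-(1 / 2) * Q x) * hla x α
    rw [← Finset.sum_neg_distrib, ← Finset.sum_neg_distrib, ← Finset.sum_add_distrib]
    rw [Finset.sum_congr rfl fun x (_ : x ∈ Finset.univ) => key x]
    simp only [Finset.mul_sum]
    rw [sum3_rot]
    exact Finset.sum_congr rfl fun a _ => Finset.sum_congr rfl fun b _ =>
      Finset.sum_congr rfl fun i _ => by ring
  have hr1 : -∑ x : Fin n, lam α x * ∑ k : Fin n, ∑ l : Fin n, 1 / 2 * d k l x * u k * v l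
      = ∑ a : Fin n, ∑ b : Fin n, ∑ i : Fin n,
          u a * v b * (-(lam α i * (1 / 2 * d a b i))) := by
    simp only [← Finset.sum_neg_distrib, ← neg_mul, Finset.mul_sum, Finset.sum_mul]
    rw [sum3_rot]
    exact Finset.sum_congr rfl fun a _ => Finset.sum_congr rfl fun b _ =>
      Finset.sum_congr rfl fun i _ => by ring
  have hr2 : -∑ x : Fin n, ∑ y : Fin n, u x * d x α y * ∑ j : Fin n, 1 / 2 * lam y j * v j
      = ∑ a : Fin n, ∑ b : Fin n, ∑ i : Fin n,
          u a * v b * (-(d a α i * (1 / 2 * lam i b))) := by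
    simp only [← Finset.sum_neg_distrib, ← neg_mul, Finset.mul_sum, Finset.sum_mul]
    rw [sum3_inner]
    exact Finset.sum_congr rfl fun a _ => Finset.sum_congr rfl fun b _ =>
      Finset.sum_congr rfl fun i _ => by ring
  have hr3 : -∑ x : Fin n, ∑ y : Fin n, v x * d x α y * ∑ j : Fin n, 1 / 2 * lam j y * u j
      = ∑ a : Fin n, ∑ b : Fin n, ∑ i : Fin n,
          u a * v b * (-(d b α i * (1 / 2 * lam a i))) := by
    simp only [← Finset.sum_neg_distrib, ← neg_mul, Finset.mul_sum, Finset.sum_mul]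
    rw [sum3_perm, sum3_inner]
    exact Finset.sum_congr rfl fun a _ => Finset.sum_congr rfl fun b _ =>
      Finset.sum_congr rfl fun i _ => by ring
  have hfinal :
      (∑ a : Fin n, ∑ b : Fin n, ∑ i : Fin n, u a * v b * (1 / 2 * d α b i * lam i a))
      + (∑ a : Fin n, ∑ b : Fin n, ∑ i : Fin n, u a * v b * (1 / 2 * lam α i * d a b i))
      + (∑ a : Fin n, ∑ b : Fin n, ∑ i : Fin n, u a * v b * (1 / 2 * d a α i * lam i b))
      = (∑ a : Fin n, ∑ b : Fin n, ∑ i : Fin n, u a * v b * (-(lam α i * (1 / 2 * d a b i))))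
      + (∑ a : Fin n, ∑ b : Fin n, ∑ i : Fin n, u a * v b * (-(d a α i * (1 / 2 * lam i b))))
      + (∑ a : Fin n, ∑ b : Fin n, ∑ i : Fin n, u a * v b * (-(d b α i * (1 / 2 * lam a i)))) := by
    simp only [← Finset.sum_add_distrib]
    refine Finset.sum_congr rfl fun a _ => Finset.sum_congr rfl fun b _ => ?_
    rw [← sub_eq_zero, ← Finset.sum_sub_distrib]
    refine Eq.trans (b := u a * v b * ∑ i : Fin n,
      (lam i a * d α b i + lam i α * d b a i + lam i b * d a α i)) ?_
      (by rw [hJ α b a, mul_zero])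
    rw [Finset.mul_sum]
    exact Finset.sum_congr rfl fun i _ => by
      rw [hla a i, hda b α i, hla α i, hda a b i]; ring
  linarith [h1, h3, h24, hr1, hr2, hr3, hfinal]


end PSMaux

/-- Poisson sigma model: for the cotangent Lie algebroid of a Poisson
structure `Λ` on `ℝ^n` and the Lagrangian `L = -(1/2) Λ^{ij} p¹_i p²_j`, the Euler–Lagrange
equations for field theories on Lie algebroids are equivalent to the Poisson sigma model
field equations. Here `k = 2`, `m = n`, and `p^A_i` is stored as `(φ t).2 i A`. -/
theorem stmt12 {n : ℕ} (Λ : Fin n → Fin n → (Fin n → ℝ) → ℝ)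
    (hΛ : ∀ i j, ContDiff ℝ (⊤ : ℕ∞) (Λ i j))
    (hΛanti : ∀ i j q, Λ i j q = - Λ j i q)
    (hJacobi : ∀ (q : Fin n → ℝ) (i j kk : Fin n),
      (∑ l : Fin n, (Λ l kk q * pQn (fun x => Λ i j x) l q
        + Λ l i q * pQn (fun x => Λ j kk x) l q
        + Λ l j q * pQn (fun x => Λ kk i x) l q)) = 0)
    (ρ : Fin n → Fin n → (Fin n → ℝ) → ℝ)
    (hρdef : ∀ i α q, ρ i α q = Λ α i q)
    (C : Fin n → Fin n → Fin n → (Fin n → ℝ) → ℝ)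
    (hCdef : ∀ γ α β q, C γ α β q = pQn (fun x => Λ α β x) γ q)
    (L : KPt n n 2 → ℝ)
    (hLdef : ∀ p : KPt n n 2,
      L p = -(1 / 2) * ∑ i : Fin n, ∑ j : Fin n, Λ i j p.1 * p.2 i 0 * p.2 j 1)
    (φ : (Fin 2 → ℝ) → KPt n n 2) (hφ : ContDiff ℝ (⊤ : ℕ∞) φ) :
    ((∀ (α : Fin n) (t : Fin 2 → ℝ),
        (∑ A : Fin 2, pT (fun s => pY L α A (φ s)) A t)
        = (∑ i : Fin n, ρ i α (φ t).1 * pQ L i (φ t))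
          + ∑ Cc : Fin 2, ∑ β : Fin n, ∑ γ : Fin n,
              (φ t).2 β Cc * C γ β α (φ t).1 * pY L γ Cc (φ t)) ∧
      (∀ (i : Fin n) (A : Fin 2) (t : Fin 2 → ℝ),
        pT (fun s => (φ s).1 i) A t = ∑ α : Fin n, ρ i α (φ t).1 * (φ t).2 α A) ∧
      (∀ (α : Fin n) (A B : Fin 2) (t : Fin 2 → ℝ),
        pT (fun s => (φ s).2 α A) B t - pT (fun s => (φ s).2 α B) A t
          + ∑ β : Fin n, ∑ γ : Fin n, C α β γ (φ t).1 * (φ t).2 β B * (φ t).2 γ A = 0))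
    ↔
    ((∀ (i : Fin n) (A : Fin 2) (t : Fin 2 → ℝ),
        pT (fun s => (φ s).1 i) A t + ∑ j : Fin n, Λ i j (φ t).1 * (φ t).2 j A = 0) ∧
      (∀ (i : Fin n) (t : Fin 2 → ℝ),
        pT (fun s => (φ s).2 i 1) 0 t - pT (fun s => (φ s).2 i 0) 1 t
          + ∑ kk : Fin n, ∑ l : Fin n,
              pQn (fun x => Λ kk l x) i (φ t).1 * (φ t).2 kk 0 * (φ t).2 l 1 = 0)) := by
  have hΛd : ∀ i j, Differentiable ℝ (Λ i j) := fun i j => (hΛ i j).differentiable (by simp)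
  have hdanti : ∀ i j l q, pQn (Λ i j) l q = - pQn (Λ j i) l q :=
    fun i j l q => PSMaux.pQn_neg_anti (fun q => hΛanti i j q) l q
  constructor
  · rintro ⟨h1, h2, h3⟩
    constructor
    · intro i A t
      rw [h2 i A t, ← Finset.sum_add_distrib]
      refine Finset.sum_eq_zero fun j _ => ?_
      rw [hρdef, hΛanti i j]
      ring
    · intro i t
      have h := h3 i 1 0 t
      simp only [hCdef] at h
      exact h
  · rintro ⟨hp1, hp2⟩
    have hq : ∀ (i : Fin n) (A : Fin 2) (t : Fin 2 → ℝ),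
        pT (fun s => (φ s).1 i) A t = -∑ j : Fin n, Λ i j (φ t).1 * (φ t).2 j A :=
      fun i A t => by have := hp1 i A t; linarith
    refine ⟨?_, ?_, ?_⟩
    · -- EL1 (redundant equation)
      intro α t
      rw [Fin.sum_univ_two]
      have e0 : (fun s => pY L α (0 : Fin 2) (φ s)) = fun s => PSMaux.G0 Λ α (φ s) :=
        funext fun s => PSMaux.pY_L0 Λ L hΛd hLdef α (φ s)
      have e1 : (fun s => pY L α (1 : Fin 2) (φ s)) = fun s => PSMaux.G1 Λ α (φ s) :=
        funext fun s => PSMaux.pY_L1 Λ L hΛd hLdef α (φ s)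
      rw [e0, e1]
      rw [PSMaux.pT_chain hφ _ 0 t (PSMaux.diff_G0 Λ hΛd α (φ t)),
          PSMaux.pT_chain hφ _ 1 t (PSMaux.diff_G1 Λ hΛd α (φ t))]
      simp only [Fin.sum_univ_two, PSMaux.pQ_G0 Λ hΛd, PSMaux.pY_G0 Λ hΛd,
        PSMaux.pQ_G1 Λ hΛd, PSMaux.pY_G1 Λ hΛd, PSMaux.pQ_L Λ L hΛd hLdef, hρdef, hCdef,
        PSMaux.pY_L0 Λ L hΛd hLdef, PSMaux.pY_L1 Λ L hΛd hLdef, PSMaux.G0, PSMaux.G1, hq]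
      norm_num
      exact PSMaux.core (fun i j => Λ i j (φ t).1) (fun k l i => pQn (Λ k l) i (φ t).1)
        (fun j => (φ t).2 j 0) (fun j => (φ t).2 j 1)
        (fun x => pT (fun s => (φ s).2 x 1) 0 t) (fun x => pT (fun s => (φ s).2 x 0) 1 t) α
        (fun i j => hΛanti i j _) (fun i j l => hdanti i j l _)
        (fun i j kk => hJacobi (φ t).1 i j kk) (fun x => hp2 x t)
    · -- EL2
      intro i A t
      rw [hq i A t]
      rw [← Finset.sum_neg_distrib]
      refine Finset.sum_congr rfl fun j _ => ?_
      rw [hρdef, hΛanti i j]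
      ring
    · -- EL3
      intro α A B t
      have h2cases : ∀ X : Fin 2, X = 0 ∨ X = 1 := by decide
      rcases h2cases A with rfl | rfl <;> rcases h2cases B with rfl | rfl <;>
        simp only [hCdef, sub_self, zero_add]
      · exact PSMaux.sum_antisym (fun a b => hdanti a b α (φ t).1) _
      · -- A = 0, B = 1
        have h := hp2 α t
        have hs : ∑ β : Fin n, ∑ γ : Fin n,
            pQn (Λ β γ) α (φ t).1 * (φ t).2 β 1 * (φ t).2 γ 0
            = - ∑ k : Fin n, ∑ l : Fin n,
                pQn (Λ k l) α (φ t).1 * (φ t).2 k 0 * (φ t).2 l 1 := by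
          rw [Finset.sum_comm, ← Finset.sum_neg_distrib]
          refine Finset.sum_congr rfl fun k _ => ?_
          rw [← Finset.sum_neg_distrib]
          refine Finset.sum_congr rfl fun l _ => ?_
          rw [hdanti l k]
          ring
        rw [hs]
        linarith
      · -- A = 1, B = 0
        have h := hp2 α t
        linarith
      · exact PSMaux.sum_antisym (fun a b => hdanti a b α (φ t).1) _
end
end
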